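/- arXiv:1304.4976 — 7 statements merged into one kernel-verified Lean document; each statement's English description precedes it below -/
import Mathlib

section
/- Under Assumptions A and B there exist constants L₀ and N₀, depending only on k1, k2, c₁, p and γ, such that whenever L ≥ L₀ and N ≥ N₀, if vᵃ is a homogeneous atomistic state with control θᵃ ∈ ℝ², vᶜ is a homogeneous continuum state with control θᶜ ∈ ℝ, and vᵃ_i = vᶜ_i for all K ≤ i ≤ L, then θᵃ = (0,0), θᶜ = 0, vᵃ_i = 0 for all 0 ≤ i ≤ L, and vᶜ_i = 0 for all K ≤ i ≤ N̄; consequently the symmetric bilinear form ⟨(θᵃ,θᶜ),(μᵃ,μᶜ)⟩ = Σ_{i=K}^{L} (vᵃ(θᵃ)_i − vᶜ(θᶜ)_i)(vᵃ(μᵃ)_i − vᶜ(μᶜ)_i) is an inner product on ℝ² × ℝ. -/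
/-! If the atomistic and continuum states agree on the overlap `[K, L]`, the continuum state,
having vanishing second differences, is affine, and affine functions are annihilated by both `Δ₁`
and `Δ₂`. Hence `vᵃ` minus this affine function solves the atomistic recurrence and vanishes on the
overlap; since `k₂ ≠ 0` the fourth-order recurrence runs downwards from four consecutive zeros, which
Assumption B provides, so the difference vanishes on `[0, L]`. The clamped conditions
`vᵃ₀ = vᵃ₁ = 0` then kill the affine function, and everything vanishes. For the form, uniqueness of
the states makes them depend linearly on the controls, and definiteness is the statement just
proved. -/

def IsAtomisticState (k1 k2 : ℝ) (L : ℤ) (θ : ℝ × ℝ) (u : ℤ → ℝ) : Prop :=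
  (∀ i, 2 ≤ i → i ≤ L - 2 →
    -k1 * (u (i - 1) - 2 * u i + u (i + 1)) - k2 * (u (i - 2) - 2 * u i + u (i + 2)) = 0) ∧
  u 0 = 0 ∧ u 1 = 0 ∧ u (L - 1) = θ.1 ∧ u L = θ.2

def IsContinuumState (kc : ℝ) (K N : ℤ) (θ : ℝ) (u : ℤ → ℝ) : Prop :=
  (∀ i, K + 1 ≤ i → i ≤ N - 2 → -kc * (u (i - 1) - 2 * u i + u (i + 1)) = 0) ∧
  u K = θ ∧ u (N - 1) = 0

section

variable {k1 k2 kc : ℝ} {K L N : ℤ}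

theorem IsAtomisticState.lincomb {θ μ : ℝ × ℝ} {u v : ℤ → ℝ}
    (hu : IsAtomisticState k1 k2 L θ u) (hv : IsAtomisticState k1 k2 L μ v) (s t : ℝ) :
    IsAtomisticState k1 k2 L (s • θ + t • μ) (fun j => s * u j + t * v j) := by
  obtain ⟨hu, hu0, hu1, huL1, huL⟩ := hu
  obtain ⟨hv, hv0, hv1, hvL1, hvL⟩ := hv
  refine ⟨fun i h1 h2 => ?_, ?_, ?_, ?_, ?_⟩
  · linear_combination s * hu i h1 h2 + t * hv i h1 h2
  all_goals simp [*]

theorem IsContinuumState.lincomb {θ μ : ℝ} {u v : ℤ → ℝ}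
    (hu : IsContinuumState kc K N θ u) (hv : IsContinuumState kc K N μ v) (s t : ℝ) :
    IsContinuumState kc K N (s * θ + t * μ) (fun j => s * u j + t * v j) := by
  obtain ⟨hu, huK, huN⟩ := hu
  obtain ⟨hv, hvK, hvN⟩ := hv
  refine ⟨fun i h1 h2 => ?_, ?_, ?_⟩
  · linear_combination s * hu i h1 h2 + t * hv i h1 h2
  all_goals simp [*]

theorem eq_affine_of_secondDiff_eq_zero {w : ℤ → ℝ} {M : ℤ}
    (hw : ∀ i, K + 1 ≤ i → i ≤ M - 1 → w (i - 1) - 2 * w i + w (i + 1) = 0) :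
    ∀ i, K ≤ i → i ≤ M → w i = w K + (w (K + 1) - w K) * (i - K) := by
  suffices h : ∀ n, K ≤ n → n + 1 ≤ M →
      w n = w K + (w (K + 1) - w K) * (n - K) ∧
        w (n + 1) = w K + (w (K + 1) - w K) * (n + 1 - K) by
    intro i hKi hiM
    rcases hKi.eq_or_lt with rfl | hlt
    · ring
    · simpa using (h (i - 1) (by omega) (by omega)).2
  intro n hn
  induction n, hn using Int.leInduction with
  | base => intro _; constructor <;> ring
  | succ n hKn ih =>
    intro hnM
    obtain ⟨h0, h1⟩ := ih (by omega)
    have e := hw (n + 1) (by omega) (by omega)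
    rw [add_sub_cancel_right] at e
    push_cast
    exact ⟨h1, by linear_combination e - h0 + 2 * h1⟩

theorem IsContinuumState.eq_affine {θ : ℝ} {u : ℤ → ℝ} (hkc : kc ≠ 0)
    (hu : IsContinuumState kc K N θ u) :
    ∀ i, K ≤ i → i ≤ N - 1 → u i = u K + (u (K + 1) - u K) * (i - K) :=
  eq_affine_of_secondDiff_eq_zero fun i h1 h2 =>
    (mul_eq_zero.mp (hu.1 i h1 (by omega))).resolve_left (neg_ne_zero.mpr hkc)

theorem eq_zero_of_atomistic_of_eq_zero_on_Icc (hk2 : k2 ≠ 0) {w : ℤ → ℝ} (hKL : K + 3 ≤ L)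
    (hw : ∀ i, 2 ≤ i → i ≤ L - 2 →
      -k1 * (w (i - 1) - 2 * w i + w (i + 1)) - k2 * (w (i - 2) - 2 * w i + w (i + 2)) = 0)
    (hzero : ∀ i, K ≤ i → i ≤ L → w i = 0) :
    ∀ i, 0 ≤ i → i ≤ L → w i = 0 := by
  suffices h : ∀ n, n ≤ K → ∀ i, n ≤ i → 0 ≤ i → i ≤ L → w i = 0 from
    fun i h0 hiL => h (min 0 K) (min_le_right _ _) i (by omega) h0 hiL
  intro n hn
  induction n, hn using Int.leInductionDown with
  | base => exact fun i hKi _ hiL => hzero i hKi hiL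
  | pred n hnK ih =>
    intro i hni h0 hiL
    rcases hni.eq_or_lt with rfl | hlt
    · -- the recurrence centred at `n + 1` determines `w (n - 1)` from four known zeros
      have e := hw (n + 1) (by omega) (by omega)
      simp only [add_sub_cancel_right, add_assoc, show n + 1 - 2 = n - 1 by ring,
        ih n le_rfl (by omega) (by omega), ih (n + 1) (by omega) (by omega) (by omega),
        ih (n + (1 + 1)) (by omega) (by omega) (by omega),
        ih (n + (1 + 2)) (by omega) (by omega) (by omega)] at e
      simpa [hk2] using e
    · exact ih i (by omega) h0 hiL

theorem IsAtomisticState.eq_zero_of_eqOn_continuum {θa : ℝ × ℝ} {θc : ℝ} {va vc : ℤ → ℝ}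
    (hk2 : k2 ≠ 0) (hkc : kc ≠ 0) (hL : 1 ≤ L) (hKL : K + 3 ≤ L) (hLN : L ≤ N - 1)
    (ha : IsAtomisticState k1 k2 L θa va) (hc : IsContinuumState kc K N θc vc)
    (hagree : ∀ i, K ≤ i → i ≤ L → va i = vc i) :
    θa = (0, 0) ∧ θc = 0 ∧ (∀ i, 0 ≤ i → i ≤ L → va i = 0) ∧
      ∀ i, K ≤ i → i ≤ N - 1 → vc i = 0 := by
  obtain ⟨hA, hva0, hva1, hvaL1, hvaL⟩ := ha
  obtain ⟨c, d, haff⟩ : ∃ c d : ℝ, ∀ i, K ≤ i → i ≤ N - 1 → vc i = c + d * (i - K) :=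
    ⟨_, _, hc.eq_affine hkc⟩
  have hmismatch := eq_zero_of_atomistic_of_eq_zero_on_Icc (k1 := k1) hk2
    (w := fun i => va i - (c + d * (i - K))) hKL
    (fun i h1 h2 => by push_cast; linear_combination hA i h1 h2)
    (fun i h1 h2 => by simp only [hagree i h1 h2, haff i h1 (by omega)]; ring)
  have e0 := hmismatch 0 le_rfl (by omega)
  have e1 := hmismatch 1 zero_le_one hL
  simp only [hva0, hva1, Int.cast_zero, Int.cast_one] at e0 e1
  have hd : d = 0 := by linear_combination e0 - e1
  have hc0 : c = 0 := by linear_combination -e0 + K * hd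
  have hva : ∀ i, 0 ≤ i → i ≤ L → va i = 0 := fun i h1 h2 => by
    simpa [hd, hc0] using hmismatch i h1 h2
  have hvc : ∀ i, K ≤ i → i ≤ N - 1 → vc i = 0 := fun i h1 h2 => by
    rw [haff i h1 h2, hc0, hd]; ring
  refine ⟨?_, ?_, hva, hvc⟩
  · rw [Prod.ext_iff, ← hvaL1, ← hvaL]
    exact ⟨hva (L - 1) (by omega) (by omega), hva L (by omega) le_rfl⟩
  · rw [← hc.2.1, hvc K le_rfl (by omega)]

theorem add_three_lt_of_div_lt {γ : ℝ} (hL : 0 < L) (hγ : 3 / (L : ℝ) < γ)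
    (hK : (L : ℝ) - K = γ * L) : K + 3 < L := by
  have hL' : (0 : ℝ) < L := by exact_mod_cast hL
  have : (3 : ℝ) < L - K := by rw [hK]; rwa [div_lt_iff₀ hL'] at hγ
  have : ((K + 3 : ℤ) : ℝ) < L := by push_cast; linarith
  exact_mod_cast this

end

theorem mismatch_form_inner_product_general (k1 k2 c₁ p γ : ℝ)
    (hk2 : k2 < 0) (hk : 0 < k1 + 4 * k2) :
    ∃ (L₀ N₀ : ℤ),
      ∀ (N K L : ℤ),
        5 ≤ N → 0 < K → K < L → L ≤ N - 1 → 4 ≤ L →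
        L₀ ≤ L → N₀ ≤ N →
        -- Assumption A
        (L : ℝ) ≤ c₁ * (N : ℝ) ^ (1 / p) →
        -- Assumption B
        3 / (L : ℝ) < γ →
        (L : ℝ) - (K : ℝ) = γ * (L : ℝ) →
        -- Part 1: agreement on the overlap forces everything to vanish
        ((∀ (θa : ℝ × ℝ) (θc : ℝ) (va vc : ℤ → ℝ),
          (∀ i, 2 ≤ i → i ≤ L - 2 →
            -k1 * (va (i - 1) - 2 * va i + va (i + 1))
              - k2 * (va (i - 2) - 2 * va i + va (i + 2)) = 0) →
          va 0 = 0 → va 1 = 0 → va (L - 1) = θa.1 → va L = θa.2 →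
          (∀ i, K + 1 ≤ i → i ≤ N - 2 →
            -(k1 + 4 * k2) * (vc (i - 1) - 2 * vc i + vc (i + 1)) = 0) →
          vc K = θc → vc (N - 1) = 0 →
          (∀ i, K ≤ i → i ≤ L → va i = vc i) →
          θa = (0, 0) ∧ θc = 0 ∧ (∀ i, 0 ≤ i → i ≤ L → va i = 0) ∧
            (∀ i, K ≤ i → i ≤ N - 1 → vc i = 0))
        -- Part 2: consequently the form is an inner product on ℝ² × ℝ
        ∧ (∀ (vA : ℝ × ℝ → ℤ → ℝ) (vC : ℝ → ℤ → ℝ),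
          -- vA θa is the (unique) homogeneous atomistic state with control θa
          (∀ θa : ℝ × ℝ,
            (∀ i, 2 ≤ i → i ≤ L - 2 →
              -k1 * (vA θa (i - 1) - 2 * vA θa i + vA θa (i + 1))
                - k2 * (vA θa (i - 2) - 2 * vA θa i + vA θa (i + 2)) = 0) ∧
            vA θa 0 = 0 ∧ vA θa 1 = 0 ∧ vA θa (L - 1) = θa.1 ∧ vA θa L = θa.2) →
          (∀ (θa : ℝ × ℝ) (w : ℤ → ℝ),
            (∀ i, 2 ≤ i → i ≤ L - 2 →
              -k1 * (w (i - 1) - 2 * w i + w (i + 1))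
                - k2 * (w (i - 2) - 2 * w i + w (i + 2)) = 0) →
            w 0 = 0 → w 1 = 0 → w (L - 1) = θa.1 → w L = θa.2 →
            ∀ i, 0 ≤ i → i ≤ L → w i = vA θa i) →
          -- vC θc is the (unique) homogeneous continuum state with control θc
          (∀ θc : ℝ,
            (∀ i, K + 1 ≤ i → i ≤ N - 2 →
              -(k1 + 4 * k2) * (vC θc (i - 1) - 2 * vC θc i + vC θc (i + 1)) = 0) ∧
            vC θc K = θc ∧ vC θc (N - 1) = 0) →
          (∀ (θc : ℝ) (w : ℤ → ℝ),
            (∀ i, K + 1 ≤ i → i ≤ N - 2 →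
              -(k1 + 4 * k2) * (w (i - 1) - 2 * w i + w (i + 1)) = 0) →
            w K = θc → w (N - 1) = 0 →
            ∀ i, K ≤ i → i ≤ N - 1 → w i = vC θc i) →
          -- symmetry
          (∀ (θa μa : ℝ × ℝ) (θc μc : ℝ),
            (∑ i ∈ Finset.Icc K L, (vA θa i - vC θc i) * (vA μa i - vC μc i)) =
            (∑ i ∈ Finset.Icc K L, (vA μa i - vC μc i) * (vA θa i - vC θc i))) ∧
          -- bilinearity (in the first argument; symmetry gives the second)
          (∀ (θa μa : ℝ × ℝ) (θc μc νc : ℝ) (νa : ℝ × ℝ) (s t : ℝ),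
            (∑ i ∈ Finset.Icc K L,
                (vA (s • θa + t • μa) i - vC (s * θc + t * μc) i)
                  * (vA νa i - vC νc i)) =
              s * (∑ i ∈ Finset.Icc K L,
                    (vA θa i - vC θc i) * (vA νa i - vC νc i))
                + t * (∑ i ∈ Finset.Icc K L,
                    (vA μa i - vC μc i) * (vA νa i - vC νc i))) ∧
          -- positive definiteness
          (∀ (θa : ℝ × ℝ) (θc : ℝ), (θa, θc) ≠ ((0, 0), 0) →
            0 < ∑ i ∈ Finset.Icc K L, (vA θa i - vC θc i) * (vA θa i - vC θc i)))) := by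
  refine ⟨0, 0, fun N K L _ hK hKL hLN _ _ _ _ hγL hγK => ?_⟩
  have hK3L := (add_three_lt_of_div_lt (by omega) hγL hγK).le
  have vanish := fun {θa θc va vc} => @IsAtomisticState.eq_zero_of_eqOn_continuum k1 k2 _ K L N
    θa θc va vc hk2.ne hk.ne' (by omega) hK3L hLN
  refine ⟨fun θa θc va vc hA h0 h1 hL1 hL hC hCK hCN =>
    vanish ⟨hA, h0, h1, hL1, hL⟩ ⟨hC, hCK, hCN⟩, fun vA vC hA hAu hC hCu => ⟨?_, ?_, ?_⟩⟩
  · exact fun _ _ _ _ => Finset.sum_congr rfl fun _ _ => mul_comm _ _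
  · intro θa μa θc μc νc νa s t
    rw [Finset.mul_sum, Finset.mul_sum, ← Finset.sum_add_distrib]
    refine Finset.sum_congr rfl fun i hi => ?_
    obtain ⟨hKi, hiL⟩ := Finset.mem_Icc.mp hi
    obtain ⟨hA', hA0, hA1, hAL1, hAL⟩ := IsAtomisticState.lincomb (hA θa) (hA μa) s t
    obtain ⟨hC', hCK, hCN⟩ := IsContinuumState.lincomb (hC θc) (hC μc) s t
    rw [← hAu _ (fun j => s * vA θa j + t * vA μa j) hA' hA0 hA1 hAL1 hAL i (by omega) hiL,
      ← hCu _ (fun j => s * vC θc j + t * vC μc j) hC' hCK hCN i hKi (by omega)]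
    ring
  · intro θa θc hne
    refine (Finset.sum_nonneg fun i _ => mul_self_nonneg _).lt_of_ne fun h => hne ?_
    have hagree := (Finset.sum_mul_self_eq_zero_iff _ _).mp h.symm
    obtain ⟨rfl, rfl, -⟩ := vanish (hA θa) (hC θc) fun i h1 h2 =>
      sub_eq_zero.mp (hagree i (Finset.mem_Icc.mpr ⟨h1, h2⟩))
    rfl

/-- definiteness of the mismatch form (Theorem `norm1` of the paper):
if the homogeneous atomistic and continuum states agree on the overlap, then all
controls and states vanish; consequently the symmetric bilinear form
`⟨(θᵃ,θᶜ),(μᵃ,μᶜ)⟩ = Σ_{i=K}^{L} (vᵃ(θᵃ)_i − vᶜ(θᶜ)_i)(vᵃ(μᵃ)_i − vᶜ(μᶜ)_i)`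
is an inner product on `ℝ² × ℝ`. -/
theorem mismatch_form_inner_product (k1 k2 c₁ p γ : ℝ)
    (hk1 : 0 < k1) (hk2 : k2 < 0) (hk : 0 < k1 + 4 * k2)
    (hc₁ : 0 < c₁) (hp : 1 < p) (hγ1 : γ < 1) :
    ∃ (L₀ N₀ : ℤ),
      ∀ (N K L : ℤ),
        5 ≤ N → 0 < K → K < L → L ≤ N - 1 → 4 ≤ L →
        L₀ ≤ L → N₀ ≤ N →
        -- Assumption A
        (L : ℝ) ≤ c₁ * (N : ℝ) ^ (1 / p) →
        -- Assumption B
        3 / (L : ℝ) < γ →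
        (L : ℝ) - (K : ℝ) = γ * (L : ℝ) →
        -- Part 1: agreement on the overlap forces everything to vanish
        ((∀ (θa : ℝ × ℝ) (θc : ℝ) (va vc : ℤ → ℝ),
          (∀ i, 2 ≤ i → i ≤ L - 2 →
            -k1 * (va (i - 1) - 2 * va i + va (i + 1))
              - k2 * (va (i - 2) - 2 * va i + va (i + 2)) = 0) →
          va 0 = 0 → va 1 = 0 → va (L - 1) = θa.1 → va L = θa.2 →
          (∀ i, K + 1 ≤ i → i ≤ N - 2 →
            -(k1 + 4 * k2) * (vc (i - 1) - 2 * vc i + vc (i + 1)) = 0) →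
          vc K = θc → vc (N - 1) = 0 →
          (∀ i, K ≤ i → i ≤ L → va i = vc i) →
          θa = (0, 0) ∧ θc = 0 ∧ (∀ i, 0 ≤ i → i ≤ L → va i = 0) ∧
            (∀ i, K ≤ i → i ≤ N - 1 → vc i = 0))
        -- Part 2: consequently the form is an inner product on ℝ² × ℝ
        ∧ (∀ (vA : ℝ × ℝ → ℤ → ℝ) (vC : ℝ → ℤ → ℝ),
          -- vA θa is the (unique) homogeneous atomistic state with control θa
          (∀ θa : ℝ × ℝ,
            (∀ i, 2 ≤ i → i ≤ L - 2 →
              -k1 * (vA θa (i - 1) - 2 * vA θa i + vA θa (i + 1))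
                - k2 * (vA θa (i - 2) - 2 * vA θa i + vA θa (i + 2)) = 0) ∧
            vA θa 0 = 0 ∧ vA θa 1 = 0 ∧ vA θa (L - 1) = θa.1 ∧ vA θa L = θa.2) →
          (∀ (θa : ℝ × ℝ) (w : ℤ → ℝ),
            (∀ i, 2 ≤ i → i ≤ L - 2 →
              -k1 * (w (i - 1) - 2 * w i + w (i + 1))
                - k2 * (w (i - 2) - 2 * w i + w (i + 2)) = 0) →
            w 0 = 0 → w 1 = 0 → w (L - 1) = θa.1 → w L = θa.2 →
            ∀ i, 0 ≤ i → i ≤ L → w i = vA θa i) →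
          -- vC θc is the (unique) homogeneous continuum state with control θc
          (∀ θc : ℝ,
            (∀ i, K + 1 ≤ i → i ≤ N - 2 →
              -(k1 + 4 * k2) * (vC θc (i - 1) - 2 * vC θc i + vC θc (i + 1)) = 0) ∧
            vC θc K = θc ∧ vC θc (N - 1) = 0) →
          (∀ (θc : ℝ) (w : ℤ → ℝ),
            (∀ i, K + 1 ≤ i → i ≤ N - 2 →
              -(k1 + 4 * k2) * (w (i - 1) - 2 * w i + w (i + 1)) = 0) →
            w K = θc → w (N - 1) = 0 →
            ∀ i, K ≤ i → i ≤ N - 1 → w i = vC θc i) →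
          -- symmetry
          (∀ (θa μa : ℝ × ℝ) (θc μc : ℝ),
            (∑ i ∈ Finset.Icc K L, (vA θa i - vC θc i) * (vA μa i - vC μc i)) =
            (∑ i ∈ Finset.Icc K L, (vA μa i - vC μc i) * (vA θa i - vC θc i))) ∧
          -- bilinearity (in the first argument; symmetry gives the second)
          (∀ (θa μa : ℝ × ℝ) (θc μc νc : ℝ) (νa : ℝ × ℝ) (s t : ℝ),
            (∑ i ∈ Finset.Icc K L,
                (vA (s • θa + t • μa) i - vC (s * θc + t * μc) i)
                  * (vA νa i - vC νc i)) =
              s * (∑ i ∈ Finset.Icc K L,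
                    (vA θa i - vC θc i) * (vA νa i - vC νc i))
                + t * (∑ i ∈ Finset.Icc K L,
                    (vA μa i - vC μc i) * (vA νa i - vC νc i))) ∧
          -- positive definiteness
          (∀ (θa : ℝ × ℝ) (θc : ℝ), (θa, θc) ≠ ((0, 0), 0) →
            0 < ∑ i ∈ Finset.Icc K L, (vA θa i - vC θc i) * (vA θa i - vC θc i)))) :=
  mismatch_form_inner_product_general k1 k2 c₁ p γ hk2 hk
end

section
/- There exist constants c > 0 and L₀, depending only on k1 and k2, such that for every L ≥ L₀, every control θᵃ = (θᵃ_{L−1}, θᵃ_L) ∈ ℝ², and every homogeneous atomistic state vᵃ with control θᵃ, one has Σ_{i=0}^{L} (vᵃ_i)² ≤ c L ((θᵃ_{L−1})² + (θᵃ_L)²). -/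
/-!
`A` is a discrete divergence: `(A v)_i = σ_{i-1} - σ_i` for the stress
`σ_i = k1 w_i + k2 (w_{i-1} + 2 w_i + w_{i+1})` of the strain `w = Δ_[1] v`, so `σ` is constant
along a homogeneous state. Removing the constant strain `ε` with `(k1 + 4 k2) ε = σ`, the
remainder `x = w - ε` solves `x_{i-1} - 2 x_i + x_{i+1} = ν x_i` with `ν = -(k1 + 4 k2) / k2 > 0`.
By the maximum principle `x` is bounded by its boundary values, which are `O(|θ| + |ε|)`, and
summing the equation bounds its partial sums by the same amount divided by `ν`. As
`v_i = (i - 1) ε + ∑_{0 < j < i} x_j`, the value `v_{L-1} = θ_{L-1}` forces `L |ε| = O(|θ|)` once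
`ν (L - 2) ≥ 16`, and then every `|v_i|` is `O(|θ|)`.
-/

open Finset

/-- `secondDiff 1` and `secondDiff 2` are the operators `Δ1` and `Δ2`. -/
def secondDiff (h : ℤ) (u : ℤ → ℝ) (i : ℤ) : ℝ := u (i - h) - 2 * u i + u (i + h)

theorem sum_Ioo_fwdDiff (f : ℤ → ℝ) {a b : ℤ} (hab : a < b) :
    ∑ i ∈ Ioo a b, fwdDiff 1 f i = f b - f (a + 1) := by
  induction b, hab using Int.leInduction with
  | base => rw [Ioo_add_one_right_eq_Ioc]; simp
  | succ b hab ih =>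
    rw [Ioo_add_one_right_eq_Ioc, ← Ioo_insert_right (by omega), sum_insert (by simp), ih]
    simp only [fwdDiff]
    ring

section DiscreteHelmholtz

variable {ν : ℝ} {x : ℤ → ℝ} {a b : ℤ}

theorem nonneg_of_secondDiff_le (hν : 0 < ν)
    (hx : ∀ i, a < i → i < b → secondDiff 1 x i ≤ ν * x i) (ha : 0 ≤ x a) (hb : 0 ≤ x b)
    {i : ℤ} (hai : a ≤ i) (hib : i ≤ b) : 0 ≤ x i := by
  obtain ⟨j, hj, hmin⟩ := exists_min_image (Icc a b) x ⟨i, mem_Icc.2 ⟨hai, hib⟩⟩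
  rw [mem_Icc] at hj
  refine le_trans ?_ (hmin i (mem_Icc.2 ⟨hai, hib⟩))
  by_contra! hneg
  have haj : a < j := lt_of_le_of_ne hj.1 (by rintro rfl; linarith)
  have hjb : j < b := lt_of_le_of_ne hj.2 (by rintro rfl; linarith)
  have hleft := hmin (j - 1) (mem_Icc.2 ⟨by omega, by omega⟩)
  have hright := hmin (j + 1) (mem_Icc.2 ⟨by omega, by omega⟩)
  have hj := hx j haj hjb
  rw [secondDiff] at hj
  nlinarith

theorem abs_le_of_secondDiff_eq (hν : 0 < ν)
    (hx : ∀ i, a < i → i < b → secondDiff 1 x i = ν * x i) {M : ℝ} (ha : |x a| ≤ M)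
    (hb : |x b| ≤ M) {i : ℤ} (hai : a ≤ i) (hib : i ≤ b) : |x i| ≤ M := by
  have hM : 0 ≤ ν * M := mul_nonneg hν.le ((abs_nonneg _).trans ha)
  rw [abs_le] at ha hb ⊢
  constructor
  · have := nonneg_of_secondDiff_le (x := fun j ↦ M + x j) hν
      (fun j h₁ h₂ ↦ by have := hx j h₁ h₂; simp only [secondDiff] at this ⊢; linarith)
      (by linarith) (by linarith) hai hib
    linarith
  · have := nonneg_of_secondDiff_le (x := fun j ↦ M - x j) hν
      (fun j h₁ h₂ ↦ by have := hx j h₁ h₂; simp only [secondDiff] at this ⊢; linarith)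
      (by linarith) (by linarith) hai hib
    linarith

theorem mul_sum_Ioo_eq_of_secondDiff_eq (hx : ∀ i, a < i → i < b → secondDiff 1 x i = ν * x i)
    (hab : a < b) : ν * ∑ i ∈ Ioo a b, x i = (x b - x (b - 1)) - (x (a + 1) - x a) := by
  have hsum := sum_Ioo_fwdDiff (fun j ↦ x j - x (j - 1)) hab
  simp only [fwdDiff, add_sub_cancel_right] at hsum
  rw [mul_sum, sum_congr rfl fun i hi ↦ (hx i (mem_Ioo.1 hi).1 (mem_Ioo.1 hi).2).symm, ← hsum]
  refine sum_congr rfl fun i _ ↦ ?_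
  rw [secondDiff]
  ring

theorem mul_abs_sum_Ioo_le_of_secondDiff_eq (hν : 0 ≤ ν)
    (hx : ∀ i, a < i → i < b → secondDiff 1 x i = ν * x i) (hab : a < b) {M : ℝ}
    (hM : ∀ i, a ≤ i → i ≤ b → |x i| ≤ M) : ν * |∑ i ∈ Ioo a b, x i| ≤ 4 * M := by
  rw [← abs_of_nonneg hν, ← abs_mul, mul_sum_Ioo_eq_of_secondDiff_eq hx hab]
  have h₁ := hM b hab.le le_rfl
  have h₂ := hM (b - 1) (by omega) (by omega)
  have h₃ := hM (a + 1) (by omega) (by omega)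
  have h₄ := hM a le_rfl hab.le
  calc |x b - x (b - 1) - (x (a + 1) - x a)| ≤ |x b| + |x (b - 1)| + (|x (a + 1)| + |x a|) :=
        (abs_sub _ _).trans (add_le_add (abs_sub _ _) (abs_sub _ _))
    _ ≤ 4 * M := by linarith

end DiscreteHelmholtz

def stress (k1 k2 : ℝ) (u : ℤ → ℝ) (i : ℤ) : ℝ :=
  k1 * (u (i + 1) - u i) + k2 * (u (i + 2) + u (i + 1) - u i - u (i - 1))

theorem stress_sub_stress_sub_one (k1 k2 : ℝ) (u : ℤ → ℝ) (i : ℤ) :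
    stress k1 k2 u i - stress k1 k2 u (i - 1) = k1 * secondDiff 1 u i + k2 * secondDiff 2 u i := by
  simp only [stress, secondDiff, sub_add_cancel, show i - 1 - 1 = i - 2 by ring,
    show i - 1 + 2 = i + 1 by ring]
  ring

theorem stress_eq_of_homogeneous {k1 k2 : ℝ} {u : ℤ → ℝ} {L : ℤ}
    (hu : ∀ i, 2 ≤ i → i ≤ L - 2 → -k1 * secondDiff 1 u i - k2 * secondDiff 2 u i = 0)
    {i : ℤ} (hi : 1 ≤ i) (hiL : i ≤ L - 2) : stress k1 k2 u i = stress k1 k2 u 1 := by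
  induction i, hi using Int.leInduction with
  | base => rfl
  | succ i hi ih =>
    have hstep := stress_sub_stress_sub_one k1 k2 u (i + 1)
    rw [add_sub_cancel_right, ih (by omega)] at hstep
    linarith [hu (i + 1) (by omega) hiL]

theorem exists_secondDiff_strain_eq {k1 k2 : ℝ} {u : ℤ → ℝ} {L : ℤ} (hk2 : k2 ≠ 0)
    (hk : k1 + 4 * k2 ≠ 0)
    (hu : ∀ i, 2 ≤ i → i ≤ L - 2 → -k1 * secondDiff 1 u i - k2 * secondDiff 2 u i = 0) :
    ∃ ε : ℝ, ∀ i, 0 < i → i < L - 1 →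
      secondDiff 1 (fun j ↦ fwdDiff 1 u j - ε) i = -(k1 + 4 * k2) / k2 * (fwdDiff 1 u i - ε) := by
  refine ⟨stress k1 k2 u 1 / (k1 + 4 * k2), fun i hi hiL ↦ ?_⟩
  have hσ := stress_eq_of_homogeneous hu (i := i) (by omega) (by omega)
  generalize stress k1 k2 u 1 = σ at hσ ⊢
  simp only [stress] at hσ
  simp only [secondDiff, fwdDiff, sub_add_cancel, show i + 1 + 1 = i + 2 by ring]
  field_simp
  linear_combination (k1 + 4 * k2) * hσ

theorem sub_eq_sum_Ioo_fwdDiff_sub (u : ℤ → ℝ) (ε : ℝ) {a b : ℤ} (hab : a < b) :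
    u b - u (a + 1) = (b - a - 1) * ε + ∑ i ∈ Ioo a b, (fwdDiff 1 u i - ε) := by
  have hcard : ((#(Ioo a b) : ℕ) : ℝ) = b - a - 1 := by exact_mod_cast Int.card_Ioo_of_lt a b hab
  rw [sum_sub_distrib, sum_Ioo_fwdDiff u hab, sum_const, nsmul_eq_mul, hcard]
  ring

section HelmholtzStrain

variable {ν ε T : ℝ} {u : ℤ → ℝ} {L : ℤ}
  (hν : 0 < ν)
  (hx : ∀ i, 0 < i → i < L - 1 →
    secondDiff 1 (fun j ↦ fwdDiff 1 u j - ε) i = ν * (fwdDiff 1 u i - ε))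
  (h0 : u 0 = 0) (h1 : u 1 = 0) (huL₁ : |u (L - 1)| ≤ T) (huL : |u L| ≤ T)
include hν hx h0 h1 huL₁ huL

theorem abs_fwdDiff_sub_le {i : ℤ} (hi : 0 ≤ i) (hiL : i ≤ L - 1) :
    |fwdDiff 1 u i - ε| ≤ 2 * T + 2 * |ε| := by
  refine abs_le_of_secondDiff_eq hν hx ?_ ?_ hi hiL
  · simp only [fwdDiff, zero_add, h0, h1, sub_self, zero_sub, abs_neg]
    linarith [(abs_nonneg _).trans huL₁, abs_nonneg ε]
  · simp only [fwdDiff, sub_add_cancel]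
    calc |u L - u (L - 1) - ε| ≤ |u L| + |u (L - 1)| + |ε| :=
          (abs_sub _ _).trans (by linarith [abs_sub (u L) (u (L - 1))])
      _ ≤ 2 * T + 2 * |ε| := by linarith [abs_nonneg ε]

theorem mul_abs_sub_mul_le {b : ℤ} (hb : 0 < b) (hbL : b ≤ L - 1) :
    ν * |u b - (b - 1) * ε| ≤ 8 * (T + |ε|) := by
  have hsplit := sub_eq_sum_Ioo_fwdDiff_sub u ε hb
  rw [zero_add, h1, Int.cast_zero, sub_zero, sub_zero, ← sub_eq_iff_eq_add'] at hsplit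
  rw [hsplit]
  have := mul_abs_sum_Ioo_le_of_secondDiff_eq hν.le (fun j hj hjb ↦ hx j hj (by omega)) hb
    fun j hj hjb ↦ abs_fwdDiff_sub_le hν hx h0 h1 huL₁ huL hj (by omega)
  linarith

theorem mul_intCast_mul_abs_le (hL : 4 ≤ L) (hνL : 16 ≤ ν * (L - 2)) :
    ν * L * |ε| ≤ 4 * (ν + 8) * T := by
  have hdev := mul_abs_sub_mul_le hν hx h0 h1 huL₁ huL (b := L - 1) (by omega) le_rfl
  push_cast at hdev
  have hL' : (4 : ℝ) ≤ L := by exact_mod_cast hL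
  have habs : ν * ((L - 2) * |ε|) ≤ ν * T + 8 * (T + |ε|) := by
    have htri : (L - 2) * |ε| ≤ |u (L - 1)| + |u (L - 1) - (L - 1 - 1) * ε| := by
      rw [← abs_of_nonneg (by linarith : (0 : ℝ) ≤ L - 2), ← abs_mul]
      calc |(L - 2) * ε| = |u (L - 1) - (u (L - 1) - (L - 1 - 1) * ε)| := by ring_nf
        _ ≤ _ := abs_sub _ _
    nlinarith [mul_le_mul_of_nonneg_left htri hν.le]
  nlinarith [mul_le_mul_of_nonneg_right hνL (abs_nonneg ε), mul_nonneg hν.le (abs_nonneg ε)]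

theorem abs_le_of_secondDiff_fwdDiff_sub_eq (hL : 4 ≤ L) (hνL : 16 ≤ ν * (L - 2)) {i : ℤ}
    (hi : 0 ≤ i) (hiL : i ≤ L) : |u i| ≤ (4 * ν ^ 2 + 72 * ν + 256) / ν ^ 2 * T := by
  rw [div_mul_eq_mul_div, le_div_iff₀ (by positivity)]
  have hT : 0 ≤ T := (abs_nonneg _).trans huL
  obtain rfl | hi := hi.eq_or_lt
  · rw [h0, abs_zero, zero_mul]
    positivity
  obtain rfl | hiL := hiL.eq_or_lt
  · nlinarith [mul_le_mul_of_nonneg_left huL (sq_nonneg ν)]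
  have hdev := mul_abs_sub_mul_le hν hx h0 h1 huL₁ huL hi (by omega)
  have hslope := mul_intCast_mul_abs_le hν hx h0 h1 huL₁ huL hL hνL
  have hi' : (i : ℝ) < L := by exact_mod_cast hiL
  have hi1 : (1 : ℝ) ≤ i := by exact_mod_cast hi
  have htri : |u i| ≤ (i - 1) * |ε| + |u i - (i - 1) * ε| := by
    calc |u i| = |(i - 1) * ε + (u i - (i - 1) * ε)| := by ring_nf
      _ ≤ _ := (abs_add_le _ _).trans (by rw [abs_mul, abs_of_nonneg (by linarith)])
  have hεT : ν * |ε| ≤ 4 * (ν + 8) * T := by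
    nlinarith [mul_nonneg hν.le (abs_nonneg ε)]
  have hνu : ν * |u i| ≤ 4 * (ν + 8) * T + 8 * (T + |ε|) := by
    nlinarith [mul_le_mul_of_nonneg_left htri hν.le, mul_nonneg hν.le (abs_nonneg ε)]
  nlinarith [mul_le_mul_of_nonneg_left hνu hν.le]

end HelmholtzStrain

theorem sum_sq_le_of_abs_le {v : ℤ → ℝ} {L : ℤ} {C p q : ℝ} (hL : 1 ≤ L)
    (hv : ∀ i ∈ Icc 0 L, |v i| ≤ C * (|p| + |q|)) :
    ∑ i ∈ Icc 0 L, v i ^ 2 ≤ 4 * C ^ 2 * L * (p ^ 2 + q ^ 2) := by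
  have hcard : ((#(Icc 0 L) : ℕ) : ℝ) = L + 1 := by
    have : ((#(Icc 0 L) : ℕ) : ℤ) = L + 1 := by rw [Int.card_Icc]; omega
    exact_mod_cast this
  have hpq : (|p| + |q|) ^ 2 ≤ 2 * (p ^ 2 + q ^ 2) := by
    nlinarith [sq_nonneg (|p| - |q|), sq_abs p, sq_abs q]
  have hL' : (1 : ℝ) ≤ L := by exact_mod_cast hL
  calc ∑ i ∈ Icc 0 L, v i ^ 2 ≤ ∑ _i ∈ Icc 0 L, (C * (|p| + |q|)) ^ 2 :=
        sum_le_sum fun i hi ↦ sq_abs (v i) ▸ pow_le_pow_left₀ (abs_nonneg _) (hv i hi) 2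
    _ = (L + 1) * C ^ 2 * (|p| + |q|) ^ 2 := by rw [sum_const, nsmul_eq_mul, hcard]; ring
    _ ≤ 4 * C ^ 2 * L * (p ^ 2 + q ^ 2) := by
      nlinarith [mul_le_mul_of_nonneg_left hpq (sq_nonneg C), sq_nonneg C,
        mul_nonneg (sq_nonneg C) (sq_nonneg (|p| + |q|))]

theorem atomistic_state_stability_general (k1 k2 : ℝ)
    (hk2 : k2 < 0) (hk : 0 < k1 + 4 * k2) :
    ∃ (c : ℝ) (L₀ : ℤ), 0 < c ∧
      ∀ (L : ℤ), 4 ≤ L → L₀ ≤ L →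
      ∀ (θa : ℝ × ℝ) (va : ℤ → ℝ),
        (∀ i, 2 ≤ i → i ≤ L - 2 →
          -k1 * (va (i - 1) - 2 * va i + va (i + 1))
            - k2 * (va (i - 2) - 2 * va i + va (i + 2)) = 0) →
        va 0 = 0 → va 1 = 0 → va (L - 1) = θa.1 → va L = θa.2 →
        (∑ i ∈ Finset.Icc (0 : ℤ) L, (va i) ^ 2) ≤
          c * (L : ℝ) * (θa.1 ^ 2 + θa.2 ^ 2) := by
  set ν := -(k1 + 4 * k2) / k2
  have hν : 0 < ν := div_pos_of_neg_of_neg (by linarith) hk2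
  refine ⟨4 * ((4 * ν ^ 2 + 72 * ν + 256) / ν ^ 2) ^ 2, ⌈16 / ν⌉ + 2, by positivity, ?_⟩
  intro L hL hL₀ θa va hva h0 h1 hθ₁ hθ₂
  have hνL : 16 ≤ ν * (L - 2) := by
    have : ((⌈16 / ν⌉ : ℤ) : ℝ) ≤ L - 2 := by exact_mod_cast (by omega : ⌈16 / ν⌉ ≤ L - 2)
    rw [← div_le_iff₀' hν]
    exact (Int.le_ceil _).trans this
  obtain ⟨ε, hε⟩ := exists_secondDiff_strain_eq hk2.ne hk.ne' hva
  have hθ₁' : |va (L - 1)| ≤ |θa.1| + |θa.2| := hθ₁ ▸ le_add_of_nonneg_right (abs_nonneg _)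
  have hθ₂' : |va L| ≤ |θa.1| + |θa.2| := hθ₂ ▸ le_add_of_nonneg_left (abs_nonneg _)
  refine sum_sq_le_of_abs_le (by omega) fun i hi ↦ ?_
  exact abs_le_of_secondDiff_fwdDiff_sub_eq hν hε h0 h1 hθ₁' hθ₂' hL hνL (mem_Icc.1 hi).1
    (mem_Icc.1 hi).2

/-- stability of the homogeneous atomistic subproblem
(first bound of Lemma `stab` of the paper). -/
theorem atomistic_state_stability (k1 k2 : ℝ)
    (hk1 : 0 < k1) (hk2 : k2 < 0) (hk : 0 < k1 + 4 * k2) :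
    ∃ (c : ℝ) (L₀ : ℤ), 0 < c ∧
      ∀ (L : ℤ), 4 ≤ L → L₀ ≤ L →
      ∀ (θa : ℝ × ℝ) (va : ℤ → ℝ),
        (∀ i, 2 ≤ i → i ≤ L - 2 →
          -k1 * (va (i - 1) - 2 * va i + va (i + 1))
            - k2 * (va (i - 2) - 2 * va i + va (i + 2)) = 0) →
        va 0 = 0 → va 1 = 0 → va (L - 1) = θa.1 → va L = θa.2 →
        (∑ i ∈ Finset.Icc (0 : ℤ) L, (va i) ^ 2) ≤
          c * (L : ℝ) * (θa.1 ^ 2 + θa.2 ^ 2) :=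
  atomistic_state_stability_general k1 k2 hk2 hk
end

section
/- There exists a constant c₀ > 0, depending only on k1 and k2 and independent of N and f, such that if ũᵃ is the atomistic solution and ũᶜ is the continuum solution for the same load f, then ‖ũᵃ − ũᶜ‖_{ℓ²({0,…,N})} ≤ c₀ N² ‖Δ1² ũᵃ‖_{ℓ²({2,…,N−2})}. -/
/-!
Since `k_c = k1 + 4 k2`, the continuum and atomistic operators differ by `k2 Δ1²`, so the error
`e = ũᵃ - ũᶜ` solves `k_c Δ1 e = -k2 Δ1² ũᵃ` in the interior and vanishes at `0, 1, N - 1, N`.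
For such `e`, telescoping from `e 1 = 0` gives the Poincaré bound `‖e‖² ≤ N² ‖∇e‖²`, and summation
by parts gives `‖∇e‖² = -⟨Δ1 e, e⟩ ≤ ‖Δ1 e‖ ‖e‖`; together `‖e‖ ≤ N² ‖Δ1 e‖`, whence
`c₀ = -k2 / k_c`.
-/

open Finset fwdDiff

def discreteLaplacian (u : ℤ → ℝ) (i : ℤ) : ℝ := u (i - 1) - 2 * u i + u (i + 1)

section
variable {a b : ℤ}

lemma sum_Ico_fwdDiff {M : Type*} [AddCommGroup M] (f : ℤ → M) (hab : a ≤ b) :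
    ∑ j ∈ Ico a b, Δ_[1] f j = f b - f a := by
  induction b, hab using Int.leInduction with
  | base => simp
  | succ b hab ih =>
    rw [← insert_Ico_right_eq_Ico_add_one hab, sum_insert (by simp), ih, fwdDiff]
    abel

lemma sq_le_mul_sum_sq_fwdDiff (e : ℤ → ℝ) (ha : e a = 0) (hab : a ≤ b) :
    e b ^ 2 ≤ (b - a) * ∑ j ∈ Ico a b, Δ_[1] e j ^ 2 := by
  have hcard : (#(Ico a b) : ℝ) = b - a := by exact_mod_cast Int.card_Ico_of_le _ _ hab
  calc e b ^ 2 = (∑ j ∈ Ico a b, Δ_[1] e j) ^ 2 := by rw [sum_Ico_fwdDiff e hab, ha, sub_zero]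
    _ ≤ #(Ico a b) * ∑ j ∈ Ico a b, Δ_[1] e j ^ 2 := sq_sum_le_card_mul_sum_sq
    _ = (b - a) * ∑ j ∈ Ico a b, Δ_[1] e j ^ 2 := by rw [hcard]

lemma sum_Ioc_sq_le_mul_sum_sq_fwdDiff (e : ℤ → ℝ) (ha : e a = 0) (hab : a ≤ b) :
    ∑ i ∈ Ioc a b, e i ^ 2 ≤ (b - a) ^ 2 * ∑ j ∈ Ico a b, Δ_[1] e j ^ 2 := by
  have hcard : (#(Ioc a b) : ℝ) = b - a := by exact_mod_cast Int.card_Ioc_of_le _ _ hab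
  calc ∑ i ∈ Ioc a b, e i ^ 2 ≤ ∑ _i ∈ Ioc a b, (b - a) * ∑ j ∈ Ico a b, Δ_[1] e j ^ 2 := by
        refine sum_le_sum fun i hi ↦ ?_
        obtain ⟨hai, hib⟩ := mem_Ioc.1 hi
        calc e i ^ 2 ≤ (i - a) * ∑ j ∈ Ico a i, Δ_[1] e j ^ 2 :=
              sq_le_mul_sum_sq_fwdDiff e ha hai.le
          _ ≤ (b - a) * ∑ j ∈ Ico a b, Δ_[1] e j ^ 2 := by
              gcongr
              exact sub_nonneg.2 (by exact_mod_cast hab)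
    _ = (b - a) ^ 2 * ∑ j ∈ Ico a b, Δ_[1] e j ^ 2 := by rw [sum_const, nsmul_eq_mul, hcard]; ring

lemma sum_Ico_sq_fwdDiff (e : ℤ → ℝ) (hab : a < b) :
    ∑ j ∈ Ico a b, Δ_[1] e j ^ 2 = e b * Δ_[1] e (b - 1) - e a * Δ_[1] e a
      - ∑ i ∈ Icc (a + 1) (b - 1), discreteLaplacian e i * e i := by
  induction b, hab using Int.leInduction with
  | base =>
    rw [Ico_add_one_right_eq_Icc, Icc_self, sum_singleton, add_sub_cancel_right,
      Icc_eq_empty (by omega), sum_empty]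
    simp only [fwdDiff]
    ring
  | succ b hab ih =>
    rw [← insert_Ico_right_eq_Ico_add_one (by omega), sum_insert (by simp), ih,
      add_sub_cancel_right, ← insert_Icc_sub_one_right_eq_Icc hab, sum_insert (by simp)]
    simp only [fwdDiff, discreteLaplacian, sub_add_cancel]
    ring
end

lemma sqrt_sum_sq_le_sq_mul_sqrt_sum_sq_discreteLaplacian {N : ℤ} (h2N : 2 < N) (e : ℤ → ℝ)
    (h0 : e 0 = 0) (h1 : e 1 = 0) (hN1 : e (N - 1) = 0) (hN : e N = 0) :
    √(∑ i ∈ Icc 0 N, e i ^ 2) ≤ N ^ 2 * √(∑ i ∈ Icc 2 (N - 2), discreteLaplacian e i ^ 2) := by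
  set E := ∑ i ∈ Icc 0 N, e i ^ 2
  set Q := ∑ i ∈ Icc 2 (N - 2), discreteLaplacian e i ^ 2
  set T := ∑ j ∈ Ico 1 (N - 1), Δ_[1] e j ^ 2
  have hE : E = ∑ i ∈ Ioc 1 (N - 1), e i ^ 2 := by
    refine (sum_subset (Ioc_subset_Icc_self.trans (Icc_subset_Icc (by omega) (by omega)))
      fun i hi hi' ↦ ?_).symm
    rw [mem_Icc] at hi
    rw [mem_Ioc] at hi'
    obtain rfl | rfl | rfl : i = 0 ∨ i = 1 ∨ i = N := by omega
    all_goals simp [h0, h1, hN]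
  have hET : E ≤ N ^ 2 * T := by
    have hP := sum_Ioc_sq_le_mul_sum_sq_fwdDiff e h1 (by omega : (1 : ℤ) ≤ N - 1)
    rw [← hE] at hP
    refine hP.trans (mul_le_mul_of_nonneg_right ?_ (sum_nonneg fun _ _ ↦ sq_nonneg _))
    have h2N' : (2 : ℝ) < N := by exact_mod_cast h2N
    exact pow_le_pow_left₀ (by push_cast; linarith) (by push_cast; linarith) 2
  have hTQ : T ≤ √Q * √E := by
    have hparts := sum_Ico_sq_fwdDiff e (by omega : (1 : ℤ) < N - 1)
    rw [h1, hN1, show (1 : ℤ) + 1 = 2 by norm_num, show N - 1 - 1 = N - 2 by ring] at hparts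
    calc T = ∑ i ∈ Icc 2 (N - 2), -discreteLaplacian e i * e i := by
          refine hparts.trans ?_
          simp only [zero_mul, sub_zero, zero_sub, neg_mul, sum_neg_distrib]
      _ ≤ √(∑ i ∈ Icc 2 (N - 2), (-discreteLaplacian e i) ^ 2) * √(∑ i ∈ Icc 2 (N - 2), e i ^ 2) :=
          Real.sum_mul_le_sqrt_mul_sqrt _ _ _
      _ ≤ √Q * √E := by
          simp only [neg_sq]
          gcongr
          exact sum_le_sum_of_subset_of_nonneg (Icc_subset_Icc (by omega) (by omega))
            fun _ _ _ ↦ sq_nonneg _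
  have hsq : √E * √E ≤ (N ^ 2 * √Q) * √E := by
    rw [Real.mul_self_sqrt (sum_nonneg fun _ _ ↦ sq_nonneg _), mul_assoc]
    exact hET.trans (mul_le_mul_of_nonneg_left hTQ (by positivity))
  rcases (Real.sqrt_nonneg E).eq_or_lt with hE0 | hE0
  · rw [← hE0]
    positivity
  · exact le_of_mul_le_mul_right hsq hE0

lemma discreteLaplacian_discreteLaplacian (u : ℤ → ℝ) (i : ℤ) :
    discreteLaplacian (discreteLaplacian u) i =
      u (i - 2) - 4 * u (i - 1) + 6 * u i - 4 * u (i + 1) + u (i + 2) := by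
  simp only [discreteLaplacian]
  ring_nf

lemma discreteLaplacian_sub_eq_of_atomistic_of_continuum {k1 k2 : ℝ} (hk : k1 + 4 * k2 ≠ 0)
    {f ua uc : ℤ → ℝ} {i : ℤ}
    (ha : -k1 * discreteLaplacian ua i - k2 * (ua (i - 2) - 2 * ua i + ua (i + 2)) = f i)
    (hc : -(k1 + 4 * k2) * discreteLaplacian uc i = f i) :
    discreteLaplacian (ua - uc) i =
      -k2 / (k1 + 4 * k2) * discreteLaplacian (discreteLaplacian ua) i := by
  rw [div_mul_eq_mul_div, eq_div_iff hk, discreteLaplacian_discreteLaplacian]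
  simp only [discreteLaplacian, Pi.sub_apply] at *
  linear_combination hc - ha

theorem continuum_modeling_error_general (k1 k2 : ℝ)
    (hk2 : k2 < 0) (hk : 0 < k1 + 4 * k2) :
    ∃ c0 : ℝ, 0 < c0 ∧
      ∀ (N : ℤ), 5 ≤ N →
      ∀ (f ua uc : ℤ → ℝ),
        -- ua is the atomistic solution
        (∀ i, 2 ≤ i → i ≤ N - 2 →
          -k1 * (ua (i - 1) - 2 * ua i + ua (i + 1))
            - k2 * (ua (i - 2) - 2 * ua i + ua (i + 2)) = f i) →
        ua 0 = 0 → ua 1 = 0 → ua (N - 1) = 0 → ua N = 0 →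
        -- uc is the continuum solution for the same load f
        (∀ i, 2 ≤ i → i ≤ N - 2 →
          -(k1 + 4 * k2) * (uc (i - 1) - 2 * uc i + uc (i + 1)) = f i) →
        uc 0 = 0 → uc 1 = 0 → uc (N - 1) = 0 → uc N = 0 →
        Real.sqrt (∑ i ∈ Finset.Icc (0 : ℤ) N, (ua i - uc i) ^ 2) ≤
          c0 * (N : ℝ) ^ 2 *
            Real.sqrt (∑ i ∈ Finset.Icc (2 : ℤ) (N - 2),
              (ua (i - 2) - 4 * ua (i - 1) + 6 * ua i - 4 * ua (i + 1)
                + ua (i + 2)) ^ 2) := by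
  have hpos : 0 < -k2 / (k1 + 4 * k2) := div_pos (neg_pos.2 hk2) hk
  refine ⟨-k2 / (k1 + 4 * k2), hpos, ?_⟩
  intro N hN f ua uc ha ha0 ha1 haN1 haN hc hc0 hc1 hcN1 hcN
  simp only [← discreteLaplacian_discreteLaplacian]
  have hres : ∀ i ∈ Icc 2 (N - 2), discreteLaplacian (ua - uc) i ^ 2 =
      (-k2 / (k1 + 4 * k2)) ^ 2 * discreteLaplacian (discreteLaplacian ua) i ^ 2 := by
    intro i hi
    obtain ⟨hi2, hiN⟩ := mem_Icc.1 hi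
    rw [discreteLaplacian_sub_eq_of_atomistic_of_continuum hk.ne' (ha i hi2 hiN) (hc i hi2 hiN),
      mul_pow]
  calc √(∑ i ∈ Icc 0 N, (ua i - uc i) ^ 2)
      ≤ N ^ 2 * √(∑ i ∈ Icc 2 (N - 2), discreteLaplacian (ua - uc) i ^ 2) :=
        sqrt_sum_sq_le_sq_mul_sqrt_sum_sq_discreteLaplacian (by omega) (ua - uc)
          (by simp [ha0, hc0]) (by simp [ha1, hc1]) (by simp [haN1, hcN1]) (by simp [haN, hcN])
    _ = -k2 / (k1 + 4 * k2) * N ^ 2 *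
          √(∑ i ∈ Icc 2 (N - 2), discreteLaplacian (discreteLaplacian ua) i ^ 2) := by
        rw [sum_congr rfl hres, ← mul_sum, Real.sqrt_mul (sq_nonneg _),
          Real.sqrt_sq hpos.le]
        ring

/-- the continuum modeling error (Proposition `cont.error`). -/
theorem continuum_modeling_error (k1 k2 : ℝ)
    (hk1 : 0 < k1) (hk2 : k2 < 0) (hk : 0 < k1 + 4 * k2) :
    ∃ c0 : ℝ, 0 < c0 ∧
      ∀ (N : ℤ), 5 ≤ N →
      ∀ (f ua uc : ℤ → ℝ),
        -- ua is the atomistic solution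
        (∀ i, 2 ≤ i → i ≤ N - 2 →
          -k1 * (ua (i - 1) - 2 * ua i + ua (i + 1))
            - k2 * (ua (i - 2) - 2 * ua i + ua (i + 2)) = f i) →
        ua 0 = 0 → ua 1 = 0 → ua (N - 1) = 0 → ua N = 0 →
        -- uc is the continuum solution for the same load f
        (∀ i, 2 ≤ i → i ≤ N - 2 →
          -(k1 + 4 * k2) * (uc (i - 1) - 2 * uc i + uc (i + 1)) = f i) →
        uc 0 = 0 → uc 1 = 0 → uc (N - 1) = 0 → uc N = 0 →
        Real.sqrt (∑ i ∈ Finset.Icc (0 : ℤ) N, (ua i - uc i) ^ 2) ≤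
          c0 * (N : ℝ) ^ 2 *
            Real.sqrt (∑ i ∈ Finset.Icc (2 : ℤ) (N - 2),
              (ua (i - 2) - 4 * ua (i - 1) + 6 * ua i - 4 * ua (i + 1)
                + ua (i + 2)) ^ 2) :=
  continuum_modeling_error_general k1 k2 hk2 hk
end

section
/- Well-posedness of the optimization-based AtC formulation: under Assumptions A and B there exist constants L₀ and N₀, depending only on k1, k2, c₁, p and γ, such that whenever L ≥ L₀ and N ≥ N₀, for every load f the constrained problem — minimize ½ Σ_{i=K}^{L} (uᵃ_i − uᶜ_i)² over pairs of functions uᵃ : {0,…,L} → ℝ and uᶜ : {K,…,N̄} → ℝ satisfying (A uᵃ)_i = f_i for 2 ≤ i ≤ L−2 with uᵃ_0 = uᵃ_1 = 0, and (C uᶜ)_i = f_i for K+1 ≤ i ≤ N−2 with uᶜ_{N̄} = 0 — admits a minimizer, and any two minimizing pairs coincide. -/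
/-!
The admissible pairs form an affine subspace, nonempty because both difference equations can be
solved as recurrences from their boundary values. Their mismatch vectors `uᵃ - uᶜ` on
`{K, …, L}` therefore form a nonempty affine subspace of a finite-dimensional Euclidean space,
which has a unique element of least norm (strict convexity); this gives existence.

Two minimizers therefore have the same mismatch vector, so they differ by a pair `(vᵃ, vᶜ)`
solving the homogeneous problem with `vᵃ = vᶜ` on the overlap. Since `C vᶜ = 0`, `vᶜ` is an affine function `ℓ`, and `A ℓ = 0`; so `vᵃ - ℓ`
solves the four-term homogeneous recurrence and vanishes on the overlap, which has at least four
sites because `γ L > 3`. Running the recurrence downwards gives `vᵃ = ℓ` on `{0, …, L}`, and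
`vᵃ₀ = vᵃ₁ = 0` forces `ℓ = 0`.
-/

theorem IsClosed.exists_isMinOn_norm {E : Type*} [NormedAddCommGroup E] [ProperSpace E]
    {s : Set E} (hs : IsClosed s) (hne : s.Nonempty) : ∃ x ∈ s, IsMinOn norm s x := by
  obtain ⟨x, hx, hdist⟩ := hs.exists_infDist_eq_dist hne 0
  refine ⟨x, hx, fun y hy => ?_⟩
  calc ‖x‖ = Metric.infDist 0 s := by rw [hdist, dist_zero_left]
    _ ≤ ‖y‖ := by simpa using Metric.infDist_le_dist_of_mem (x := 0) hy

theorem Convex.eq_of_isMinOn_norm {E : Type*} [NormedAddCommGroup E] [NormedSpace ℝ E]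
    [StrictConvexSpace ℝ E] {s : Set E} (hs : Convex ℝ s) {x y : E} (hx : x ∈ s) (hy : y ∈ s)
    (hmx : IsMinOn norm s x) (hmy : IsMinOn norm s y) : x = y := by
  have hxy : ‖x‖ = ‖y‖ := le_antisymm (hmx hy) (hmy hx)
  by_contra hne
  have hmid : (1 / 2 : ℝ) • (x + y) ∈ s := by
    simpa [smul_add] using hs hx hy (by norm_num) (by norm_num) (add_halves 1)
  exact ((norm_midpoint_lt_iff hxy).mpr hne).not_ge (hmx hmid)

namespace AtC

def secondDiff (h : ℤ) : (ℤ → ℝ) →ₗ[ℝ] (ℤ → ℝ) where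
  toFun u i := u (i - h) - 2 * u i + u (i + h)
  map_add' u v := by ext i; simp only [Pi.add_apply]; ring
  map_smul' c u := by ext i; simp only [Pi.smul_apply, smul_eq_mul, RingHom.id_apply]; ring

def atomisticOp (k1 k2 : ℝ) : (ℤ → ℝ) →ₗ[ℝ] (ℤ → ℝ) := -k1 • secondDiff 1 - k2 • secondDiff 2

def continuumOp (kc : ℝ) : (ℤ → ℝ) →ₗ[ℝ] (ℤ → ℝ) := -kc • secondDiff 1

@[simp]
theorem secondDiff_apply (h : ℤ) (u : ℤ → ℝ) (i : ℤ) :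
    secondDiff h u i = u (i - h) - 2 * u i + u (i + h) := rfl

theorem atomisticOp_apply (k1 k2 : ℝ) (u : ℤ → ℝ) (i : ℤ) :
    atomisticOp k1 k2 u i =
      -k1 * (u (i - 1) - 2 * u i + u (i + 1)) - k2 * (u (i - 2) - 2 * u i + u (i + 2)) := rfl

theorem continuumOp_apply (kc : ℝ) (u : ℤ → ℝ) (i : ℤ) :
    continuumOp kc u i = -kc * (u (i - 1) - 2 * u i + u (i + 1)) := rfl

theorem secondDiff_affine (h : ℤ) (a c s : ℝ) : secondDiff h (fun i => c + (i - a) * s) = 0 := by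
  ext i; simp only [secondDiff_apply, Pi.zero_apply]; push_cast; ring

theorem atomisticOp_affine (k1 k2 a c s : ℝ) :
    atomisticOp k1 k2 (fun i => c + (i - a) * s) = 0 := by
  simp [atomisticOp, secondDiff_affine]

-- `(A u)_{i-2} = f_{i-2}` solved for `u_i`, started from `u = 0` on `i ≤ 1`.
noncomputable def atomisticSolution (k1 k2 : ℝ) (f : ℤ → ℝ) (i : ℤ) : ℝ :=
  if i ≤ 1 then 0 else
    -(f (i - 2) + k1 * (atomisticSolution k1 k2 f (i - 3) - 2 * atomisticSolution k1 k2 f (i - 2)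
        + atomisticSolution k1 k2 f (i - 1))
      + k2 * (atomisticSolution k1 k2 f (i - 4) - 2 * atomisticSolution k1 k2 f (i - 2))) / k2
termination_by i.toNat

theorem atomisticOp_atomisticSolution {k1 k2 : ℝ} (hk2 : k2 ≠ 0) (f : ℤ → ℝ) {i : ℤ}
    (hi : 0 ≤ i) : atomisticOp k1 k2 (atomisticSolution k1 k2 f) i = f i := by
  rw [atomisticOp_apply, atomisticSolution.eq_1 k1 k2 f (i + 2), if_neg (by omega)]
  simp only [show i + 2 - 2 = i by ring, show i + 2 - 3 = i - 1 by ring,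
    show i + 2 - 1 = i + 1 by ring, show i + 2 - 4 = i - 2 by ring]
  field_simp
  ring

-- `(C u)_{i+1} = f_{i+1}` solved for `u_i`, started from `u = 0` on `i ≥ N - 2`.
noncomputable def continuumSolution (kc : ℝ) (N : ℤ) (f : ℤ → ℝ) (i : ℤ) : ℝ :=
  if N - 2 ≤ i then 0 else
    2 * continuumSolution kc N f (i + 1) - continuumSolution kc N f (i + 2) - f (i + 1) / kc
termination_by (N - i).toNat

theorem continuumOp_continuumSolution {kc : ℝ} (hkc : kc ≠ 0) (N : ℤ) (f : ℤ → ℝ) {i : ℤ}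
    (hi : i ≤ N - 2) : continuumOp kc (continuumSolution kc N f) i = f i := by
  rw [continuumOp_apply, continuumSolution.eq_1 kc N f (i - 1), if_neg (by omega)]
  simp only [sub_add_cancel, show i - 1 + 2 = i + 1 by ring]
  field_simp
  ring

theorem eq_affine_of_secondDiff_eq_zero {v : ℤ → ℝ} {a b : ℤ}
    (hv : ∀ i, a + 1 ≤ i → i ≤ b - 1 → secondDiff 1 v i = 0) :
    ∀ i, a ≤ i → i ≤ b → v i = v a + (i - a) * (v (a + 1) - v a) := by
  have hstep : ∀ i, a ≤ i → i < b → v (i + 1) - v i = v (a + 1) - v a := by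
    intro i hai
    induction i, hai using Int.leInduction with
    | base => intro; rfl
    | succ i hai ih =>
      intro hib
      have h := hv (i + 1) (by omega) (by omega)
      simp only [secondDiff_apply, add_sub_cancel_right] at h
      rw [← ih (by omega)]
      linear_combination h
  intro i hai
  induction i, hai using Int.leInduction with
  | base => intro; simp
  | succ i hai ih =>
    intro hib
    rw [← sub_add_cancel (v (i + 1)) (v i), hstep i hai (by omega), ih (by omega)]
    push_cast
    ring

theorem eq_zero_of_atomisticOp_eq_zero {k1 k2 : ℝ} (hk2 : k2 ≠ 0) {K L : ℤ} (hKL : K + 3 ≤ L)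
    {w : ℤ → ℝ} (hw : ∀ i, 2 ≤ i → i ≤ L - 2 → atomisticOp k1 k2 w i = 0)
    (hzero : ∀ i, K ≤ i → i ≤ L → w i = 0) :
    ∀ i, 0 ≤ i → i ≤ L → w i = 0 := by
  suffices ∀ m : ℕ, ∀ i, 0 ≤ i → K - m ≤ i → i ≤ L → w i = 0 from
    fun i hi0 hiL => this K.toNat i hi0 (by omega) hiL
  intro m
  induction m with
  | zero => exact fun i _ hKi hiL => hzero i (by simpa using hKi) hiL
  | succ m ih =>
    intro i hi0 hmi hiL
    by_cases hi : K - m ≤ i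
    · exact ih i hi0 hi hiL
    -- `(A w)_{i+2} = 0` determines `w i` from the four values above it, as `k2 ≠ 0`
    have h := hw (i + 2) (by omega) (by omega)
    rw [atomisticOp_apply, show i + 2 - 1 = i + 1 by ring, add_sub_cancel_right,
      add_assoc, add_assoc, show (2 : ℤ) + 1 = 3 by norm_num, show (2 : ℤ) + 2 = 4 by norm_num,
      ih (i + 1) (by omega) (by omega) (by omega), ih (i + 2) (by omega) (by omega) (by omega),
      ih (i + 3) (by omega) (by omega) (by omega), ih (i + 4) (by omega) (by omega) (by omega)] at h
    simpa [hk2] using h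

-- Only the values of the first component on `{0, …, L}` and of the second on `{K, …, N - 1}`
-- enter the constraints.
def admissible (k1 k2 kc : ℝ) (N K L : ℤ) (f : ℤ → ℝ) :
    AffineSubspace ℝ ((ℤ → ℝ) × (ℤ → ℝ)) where
  carrier := {p | (∀ i, 2 ≤ i → i ≤ L - 2 → atomisticOp k1 k2 p.1 i = f i) ∧ p.1 0 = 0 ∧
    p.1 1 = 0 ∧ (∀ i, K + 1 ≤ i → i ≤ N - 2 → continuumOp kc p.2 i = f i) ∧ p.2 (N - 1) = 0}
  smul_vsub_vadd_mem' c p q r := by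
    rintro ⟨hpa, hp0, hp1, hpc, hpN⟩ ⟨hqa, hq0, hq1, hqc, hqN⟩ ⟨hra, hr0, hr1, hrc, hrN⟩
    refine ⟨fun i hi hi' => ?_, by simp [*], by simp [*], fun i hi hi' => ?_, by simp [*]⟩
    · simp [hpa i hi hi', hqa i hi hi', hra i hi hi']
    · simp [hpc i hi hi', hqc i hi hi', hrc i hi hi']

theorem admissible_nonempty {k1 k2 kc : ℝ} (hk2 : k2 ≠ 0) (hkc : kc ≠ 0) (N K L : ℤ)
    (f : ℤ → ℝ) : (admissible k1 k2 kc N K L f : Set ((ℤ → ℝ) × (ℤ → ℝ))).Nonempty := by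
  refine ⟨(atomisticSolution k1 k2 f, continuumSolution kc N f),
    fun i hi _ => atomisticOp_atomisticSolution hk2 f (by omega), ?_, ?_,
    fun i _ hi => continuumOp_continuumSolution hkc N f hi, ?_⟩ <;>
  simp [atomisticSolution, continuumSolution]

theorem sub_mem_admissible_zero {k1 k2 kc : ℝ} {N K L : ℤ} {f : ℤ → ℝ}
    {p q : (ℤ → ℝ) × (ℤ → ℝ)} (hp : p ∈ admissible k1 k2 kc N K L f)
    (hq : q ∈ admissible k1 k2 kc N K L f) : p - q ∈ admissible k1 k2 kc N K L 0 := by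
  obtain ⟨hpa, hp0, hp1, hpc, hpN⟩ := hp
  obtain ⟨hqa, hq0, hq1, hqc, hqN⟩ := hq
  refine ⟨fun i hi hi' => ?_, by simp [*], by simp [*], fun i hi hi' => ?_, by simp [*]⟩
  · simp [hpa i hi hi', hqa i hi hi']
  · simp [hpc i hi hi', hqc i hi hi']

theorem eq_zero_of_mem_admissible_zero {k1 k2 kc : ℝ} (hk2 : k2 ≠ 0) (hkc : kc ≠ 0)
    {N K L : ℤ} (hK : 0 ≤ K) (hKL : K + 3 ≤ L) (hLN : L ≤ N - 1) {v : (ℤ → ℝ) × (ℤ → ℝ)}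
    (hv : v ∈ admissible k1 k2 kc N K L 0) (hagree : ∀ i, K ≤ i → i ≤ L → v.1 i = v.2 i) :
    (∀ i, 0 ≤ i → i ≤ L → v.1 i = 0) ∧ (∀ i, K ≤ i → i ≤ N - 1 → v.2 i = 0) := by
  obtain ⟨hva, hv0, hv1, hvc, -⟩ := hv
  set ℓ : ℤ → ℝ := fun i => v.2 K + (i - K) * (v.2 (K + 1) - v.2 K) with hℓ
  have hcℓ : ∀ i, K ≤ i → i ≤ N - 1 → v.2 i = ℓ i :=
    eq_affine_of_secondDiff_eq_zero fun i hi hi' => by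
      simpa [continuumOp, hkc] using hvc i hi (by omega)
  have hwℓ : ∀ i, 0 ≤ i → i ≤ L → v.1 i - ℓ i = 0 := by
    refine eq_zero_of_atomisticOp_eq_zero (k1 := k1) (w := v.1 - ℓ) hk2 hKL
      (fun i hi hi' => ?_) (fun i hi hi' => ?_)
    · simpa [hℓ, atomisticOp_affine] using hva i hi hi'
    · simp [hagree i hi hi', hcℓ i hi (by omega)]
  have hℓ0 := hwℓ 0 le_rfl (by omega)
  have hℓ1 := hwℓ 1 zero_le_one (by omega)
  simp only [hv0, hv1, hℓ] at hℓ0 hℓ1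
  have hs : v.2 (K + 1) - v.2 K = 0 := by push_cast at hℓ0 hℓ1; linarith
  have hK : v.2 K = 0 := by simpa [hs] using hℓ0
  have hℓ_zero : ∀ i, ℓ i = 0 := fun i => by rw [hℓ]; dsimp only; rw [hs, hK]; ring
  exact ⟨fun i hi hi' => by simpa [hℓ_zero] using hwℓ i hi hi',
    fun i hi hi' => by rw [hcℓ i hi hi', hℓ_zero]⟩

def residual (K L : ℤ) : (ℤ → ℝ) × (ℤ → ℝ) →ₗ[ℝ] EuclideanSpace ℝ (Finset.Icc K L) where
  toFun p := WithLp.toLp 2 fun i => p.1 i - p.2 i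
  map_add' p q := by
    ext i; simp only [Prod.fst_add, Pi.add_apply, Prod.snd_add, PiLp.add_apply]; ring
  map_smul' c p := by
    ext i
    simp only [Prod.smul_fst, Pi.smul_apply, smul_eq_mul, Prod.smul_snd, Real.ringHom_apply,
      PiLp.smul_apply]
    ring

noncomputable def mismatch (K L : ℤ) (p : (ℤ → ℝ) × (ℤ → ℝ)) : ℝ :=
  1 / 2 * ∑ i ∈ Finset.Icc K L, (p.1 i - p.2 i) ^ 2

theorem mismatch_eq_norm_residual_sq (K L : ℤ) (p : (ℤ → ℝ) × (ℤ → ℝ)) :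
    mismatch K L p = ‖residual K L p‖ ^ 2 / 2 := by
  rw [EuclideanSpace.norm_sq_eq, mismatch, ← Finset.sum_coe_sort]
  simp [residual]
  ring

theorem isMinOn_mismatch_iff {K L : ℤ} {A : Set ((ℤ → ℝ) × (ℤ → ℝ))} {p : (ℤ → ℝ) × (ℤ → ℝ)} :
    IsMinOn (mismatch K L) A p ↔ IsMinOn norm (residual K L '' A) (residual K L p) := by
  simp only [isMinOn_iff, Set.forall_mem_image, mismatch_eq_norm_residual_sq]
  refine forall₂_congr fun x _ => ?_
  rw [div_le_div_iff_of_pos_right two_pos, sq_le_sq₀ (norm_nonneg _) (norm_nonneg _)]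

theorem isMinOn_mismatch_admissible_iff {k1 k2 kc : ℝ} {N K L : ℤ} {f : ℤ → ℝ}
    {p : (ℤ → ℝ) × (ℤ → ℝ)} :
    IsMinOn (mismatch K L) (admissible k1 k2 kc N K L f) p ↔
      ∀ wa wc : ℤ → ℝ, (∀ i, 2 ≤ i → i ≤ L - 2 → atomisticOp k1 k2 wa i = f i) →
        wa 0 = 0 → wa 1 = 0 → (∀ i, K + 1 ≤ i → i ≤ N - 2 → continuumOp kc wc i = f i) →
        wc (N - 1) = 0 → mismatch K L p ≤ mismatch K L (wa, wc) :=
  ⟨fun h _ _ ha ha0 ha1 hc hcN => h ⟨ha, ha0, ha1, hc, hcN⟩,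
    fun h => isMinOn_iff.mpr fun w ⟨ha, ha0, ha1, hc, hcN⟩ => h w.1 w.2 ha ha0 ha1 hc hcN⟩

theorem exists_isMinOn_mismatch {k1 k2 kc : ℝ} (hk2 : k2 ≠ 0) (hkc : kc ≠ 0) (N K L : ℤ)
    (f : ℤ → ℝ) :
    ∃ p ∈ admissible k1 k2 kc N K L f, IsMinOn (mismatch K L) (admissible k1 k2 kc N K L f) p := by
  set A := admissible k1 k2 kc N K L f
  have hclosed : IsClosed (residual K L '' A) := by
    simpa using (A.map (residual K L).toAffineMap).closed_of_finiteDimensional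
  obtain ⟨_, ⟨p, hp, rfl⟩, hmin⟩ :=
    hclosed.exists_isMinOn_norm ((admissible_nonempty hk2 hkc N K L f).image _)
  exact ⟨p, hp, isMinOn_mismatch_iff.mpr hmin⟩

theorem eqOn_of_isMinOn_mismatch {k1 k2 kc : ℝ} (hk2 : k2 ≠ 0) (hkc : kc ≠ 0) {N K L : ℤ}
    (hK : 0 ≤ K) (hKL : K + 3 ≤ L) (hLN : L ≤ N - 1) {f : ℤ → ℝ} {p q : (ℤ → ℝ) × (ℤ → ℝ)}
    (hp : p ∈ admissible k1 k2 kc N K L f) (hq : q ∈ admissible k1 k2 kc N K L f)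
    (hmp : IsMinOn (mismatch K L) (admissible k1 k2 kc N K L f) p)
    (hmq : IsMinOn (mismatch K L) (admissible k1 k2 kc N K L f) q) :
    (∀ i, 0 ≤ i → i ≤ L → p.1 i = q.1 i) ∧ (∀ i, K ≤ i → i ≤ N - 1 → p.2 i = q.2 i) := by
  have hres : residual K L p = residual K L q :=
    ((admissible k1 k2 kc N K L f).convex.linear_image _).eq_of_isMinOn_norm
      (Set.mem_image_of_mem _ hp) (Set.mem_image_of_mem _ hq)
      (isMinOn_mismatch_iff.mp hmp) (isMinOn_mismatch_iff.mp hmq)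
  have hagree : ∀ i, K ≤ i → i ≤ L → (p - q).1 i = (p - q).2 i := fun i hi hi' => by
    have := congrArg (· ⟨i, Finset.mem_Icc.mpr ⟨hi, hi'⟩⟩) hres
    simp only [residual, LinearMap.coe_mk, AddHom.coe_mk, PiLp.toLp_apply] at this
    simp only [Prod.fst_sub, Prod.snd_sub, Pi.sub_apply]
    linarith
  obtain ⟨ha, hc⟩ := eq_zero_of_mem_admissible_zero hk2 hkc hK hKL hLN
    (sub_mem_admissible_zero hp hq) hagree
  exact ⟨fun i hi hi' => sub_eq_zero.mp (ha i hi hi'), fun i hi hi' => sub_eq_zero.mp (hc i hi hi')⟩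

end AtC

theorem atc_well_posedness_general (k1 k2 c₁ p γ : ℝ)
    (hk2 : k2 < 0) (hk : 0 < k1 + 4 * k2) :
    ∃ (L₀ N₀ : ℤ),
      ∀ (N K L : ℤ),
        5 ≤ N → 0 < K → K < L → L ≤ N - 1 → 4 ≤ L →
        L₀ ≤ L → N₀ ≤ N →
        -- Assumption A
        (L : ℝ) ≤ c₁ * (N : ℝ) ^ (1 / p) →
        -- Assumption B
        3 / (L : ℝ) < γ →
        (L : ℝ) - (K : ℝ) = γ * (L : ℝ) →
        ∀ f : ℤ → ℝ,
        -- existence of a minimizer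
        (∃ ua uc : ℤ → ℝ,
          ((∀ i, 2 ≤ i → i ≤ L - 2 →
            -k1 * (ua (i - 1) - 2 * ua i + ua (i + 1))
              - k2 * (ua (i - 2) - 2 * ua i + ua (i + 2)) = f i) ∧
          ua 0 = 0 ∧ ua 1 = 0 ∧
          (∀ i, K + 1 ≤ i → i ≤ N - 2 →
            -(k1 + 4 * k2) * (uc (i - 1) - 2 * uc i + uc (i + 1)) = f i) ∧
          uc (N - 1) = 0) ∧
          (∀ wa wc : ℤ → ℝ,
            (∀ i, 2 ≤ i → i ≤ L - 2 →
              -k1 * (wa (i - 1) - 2 * wa i + wa (i + 1))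
                - k2 * (wa (i - 2) - 2 * wa i + wa (i + 2)) = f i) →
            wa 0 = 0 → wa 1 = 0 →
            (∀ i, K + 1 ≤ i → i ≤ N - 2 →
              -(k1 + 4 * k2) * (wc (i - 1) - 2 * wc i + wc (i + 1)) = f i) →
            wc (N - 1) = 0 →
            (1 / 2) * ∑ i ∈ Finset.Icc K L, (ua i - uc i) ^ 2 ≤
              (1 / 2) * ∑ i ∈ Finset.Icc K L, (wa i - wc i) ^ 2)) ∧
        -- uniqueness: any two minimizing pairs coincide
        (∀ ua uc ua' uc' : ℤ → ℝ,
          -- (ua, uc) is a minimizing pair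
          ((∀ i, 2 ≤ i → i ≤ L - 2 →
            -k1 * (ua (i - 1) - 2 * ua i + ua (i + 1))
              - k2 * (ua (i - 2) - 2 * ua i + ua (i + 2)) = f i) ∧
          ua 0 = 0 ∧ ua 1 = 0 ∧
          (∀ i, K + 1 ≤ i → i ≤ N - 2 →
            -(k1 + 4 * k2) * (uc (i - 1) - 2 * uc i + uc (i + 1)) = f i) ∧
          uc (N - 1) = 0) →
          (∀ wa wc : ℤ → ℝ,
            (∀ i, 2 ≤ i → i ≤ L - 2 →
              -k1 * (wa (i - 1) - 2 * wa i + wa (i + 1))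
                - k2 * (wa (i - 2) - 2 * wa i + wa (i + 2)) = f i) →
            wa 0 = 0 → wa 1 = 0 →
            (∀ i, K + 1 ≤ i → i ≤ N - 2 →
              -(k1 + 4 * k2) * (wc (i - 1) - 2 * wc i + wc (i + 1)) = f i) →
            wc (N - 1) = 0 →
            (1 / 2) * ∑ i ∈ Finset.Icc K L, (ua i - uc i) ^ 2 ≤
              (1 / 2) * ∑ i ∈ Finset.Icc K L, (wa i - wc i) ^ 2) →
          -- (ua', uc') is a minimizing pair
          ((∀ i, 2 ≤ i → i ≤ L - 2 →
            -k1 * (ua' (i - 1) - 2 * ua' i + ua' (i + 1))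
              - k2 * (ua' (i - 2) - 2 * ua' i + ua' (i + 2)) = f i) ∧
          ua' 0 = 0 ∧ ua' 1 = 0 ∧
          (∀ i, K + 1 ≤ i → i ≤ N - 2 →
            -(k1 + 4 * k2) * (uc' (i - 1) - 2 * uc' i + uc' (i + 1)) = f i) ∧
          uc' (N - 1) = 0) →
          (∀ wa wc : ℤ → ℝ,
            (∀ i, 2 ≤ i → i ≤ L - 2 →
              -k1 * (wa (i - 1) - 2 * wa i + wa (i + 1))
                - k2 * (wa (i - 2) - 2 * wa i + wa (i + 2)) = f i) →
            wa 0 = 0 → wa 1 = 0 →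
            (∀ i, K + 1 ≤ i → i ≤ N - 2 →
              -(k1 + 4 * k2) * (wc (i - 1) - 2 * wc i + wc (i + 1)) = f i) →
            wc (N - 1) = 0 →
            (1 / 2) * ∑ i ∈ Finset.Icc K L, (ua' i - uc' i) ^ 2 ≤
              (1 / 2) * ∑ i ∈ Finset.Icc K L, (wa i - wc i) ^ 2) →
          -- then they coincide on the respective subdomains
          (∀ i, 0 ≤ i → i ≤ L → ua i = ua' i) ∧
          (∀ i, K ≤ i → i ≤ N - 1 → uc i = uc' i)) := by
  refine ⟨0, 0, fun N K L _ hK hKL hLN _ _ _ _ hγL hB f => ?_⟩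
  have hL : (0 : ℝ) < L := by exact_mod_cast hK.trans hKL
  have hgap : K + 3 ≤ L := by
    have : ((K + 3 : ℤ) : ℝ) < L := by
      push_cast
      linarith [(div_lt_iff₀ hL).mp hγL]
    exact_mod_cast this.le
  obtain ⟨q, hq, hmin⟩ := AtC.exists_isMinOn_mismatch (k1 := k1) hk2.ne hk.ne' N K L f
  refine ⟨⟨q.1, q.2, hq, AtC.isMinOn_mismatch_admissible_iff.mp hmin⟩,
    fun ua uc ua' uc' hu hmu hu' hmu' => ?_⟩
  exact AtC.eqOn_of_isMinOn_mismatch (p := (ua, uc)) (q := (ua', uc')) hk2.ne hk.ne' hK.le hgap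
    hLN hu hu' (AtC.isMinOn_mismatch_admissible_iff.mpr hmu)
    (AtC.isMinOn_mismatch_admissible_iff.mpr hmu')

/-- well-posedness of the optimization-based AtC formulation:
the constrained minimization problem admits a minimizer and any two minimizing
pairs coincide (on the respective subdomains). -/
theorem atc_well_posedness (k1 k2 c₁ p γ : ℝ)
    (hk1 : 0 < k1) (hk2 : k2 < 0) (hk : 0 < k1 + 4 * k2)
    (hc₁ : 0 < c₁) (hp : 1 < p) (hγ1 : γ < 1) :
    ∃ (L₀ N₀ : ℤ),
      ∀ (N K L : ℤ),
        5 ≤ N → 0 < K → K < L → L ≤ N - 1 → 4 ≤ L →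
        L₀ ≤ L → N₀ ≤ N →
        -- Assumption A
        (L : ℝ) ≤ c₁ * (N : ℝ) ^ (1 / p) →
        -- Assumption B
        3 / (L : ℝ) < γ →
        (L : ℝ) - (K : ℝ) = γ * (L : ℝ) →
        ∀ f : ℤ → ℝ,
        -- existence of a minimizer
        (∃ ua uc : ℤ → ℝ,
          ((∀ i, 2 ≤ i → i ≤ L - 2 →
            -k1 * (ua (i - 1) - 2 * ua i + ua (i + 1))
              - k2 * (ua (i - 2) - 2 * ua i + ua (i + 2)) = f i) ∧
          ua 0 = 0 ∧ ua 1 = 0 ∧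
          (∀ i, K + 1 ≤ i → i ≤ N - 2 →
            -(k1 + 4 * k2) * (uc (i - 1) - 2 * uc i + uc (i + 1)) = f i) ∧
          uc (N - 1) = 0) ∧
          (∀ wa wc : ℤ → ℝ,
            (∀ i, 2 ≤ i → i ≤ L - 2 →
              -k1 * (wa (i - 1) - 2 * wa i + wa (i + 1))
                - k2 * (wa (i - 2) - 2 * wa i + wa (i + 2)) = f i) →
            wa 0 = 0 → wa 1 = 0 →
            (∀ i, K + 1 ≤ i → i ≤ N - 2 →
              -(k1 + 4 * k2) * (wc (i - 1) - 2 * wc i + wc (i + 1)) = f i) →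
            wc (N - 1) = 0 →
            (1 / 2) * ∑ i ∈ Finset.Icc K L, (ua i - uc i) ^ 2 ≤
              (1 / 2) * ∑ i ∈ Finset.Icc K L, (wa i - wc i) ^ 2)) ∧
        -- uniqueness: any two minimizing pairs coincide
        (∀ ua uc ua' uc' : ℤ → ℝ,
          -- (ua, uc) is a minimizing pair
          ((∀ i, 2 ≤ i → i ≤ L - 2 →
            -k1 * (ua (i - 1) - 2 * ua i + ua (i + 1))
              - k2 * (ua (i - 2) - 2 * ua i + ua (i + 2)) = f i) ∧
          ua 0 = 0 ∧ ua 1 = 0 ∧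
          (∀ i, K + 1 ≤ i → i ≤ N - 2 →
            -(k1 + 4 * k2) * (uc (i - 1) - 2 * uc i + uc (i + 1)) = f i) ∧
          uc (N - 1) = 0) →
          (∀ wa wc : ℤ → ℝ,
            (∀ i, 2 ≤ i → i ≤ L - 2 →
              -k1 * (wa (i - 1) - 2 * wa i + wa (i + 1))
                - k2 * (wa (i - 2) - 2 * wa i + wa (i + 2)) = f i) →
            wa 0 = 0 → wa 1 = 0 →
            (∀ i, K + 1 ≤ i → i ≤ N - 2 →
              -(k1 + 4 * k2) * (wc (i - 1) - 2 * wc i + wc (i + 1)) = f i) →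
            wc (N - 1) = 0 →
            (1 / 2) * ∑ i ∈ Finset.Icc K L, (ua i - uc i) ^ 2 ≤
              (1 / 2) * ∑ i ∈ Finset.Icc K L, (wa i - wc i) ^ 2) →
          -- (ua', uc') is a minimizing pair
          ((∀ i, 2 ≤ i → i ≤ L - 2 →
            -k1 * (ua' (i - 1) - 2 * ua' i + ua' (i + 1))
              - k2 * (ua' (i - 2) - 2 * ua' i + ua' (i + 2)) = f i) ∧
          ua' 0 = 0 ∧ ua' 1 = 0 ∧
          (∀ i, K + 1 ≤ i → i ≤ N - 2 →
            -(k1 + 4 * k2) * (uc' (i - 1) - 2 * uc' i + uc' (i + 1)) = f i) ∧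
          uc' (N - 1) = 0) →
          (∀ wa wc : ℤ → ℝ,
            (∀ i, 2 ≤ i → i ≤ L - 2 →
              -k1 * (wa (i - 1) - 2 * wa i + wa (i + 1))
                - k2 * (wa (i - 2) - 2 * wa i + wa (i + 2)) = f i) →
            wa 0 = 0 → wa 1 = 0 →
            (∀ i, K + 1 ≤ i → i ≤ N - 2 →
              -(k1 + 4 * k2) * (wc (i - 1) - 2 * wc i + wc (i + 1)) = f i) →
            wc (N - 1) = 0 →
            (1 / 2) * ∑ i ∈ Finset.Icc K L, (ua' i - uc' i) ^ 2 ≤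
              (1 / 2) * ∑ i ∈ Finset.Icc K L, (wa i - wc i) ^ 2) →
          -- then they coincide on the respective subdomains
          (∀ i, 0 ≤ i → i ≤ L → ua i = ua' i) ∧
          (∀ i, K ≤ i → i ≤ N - 1 → uc i = uc' i)) :=
  atc_well_posedness_general k1 k2 c₁ p γ hk2 hk
end

section
/- There exists a constant c > 0, depending only on k1 and k2 and independent of N, K, L and f, such that if ũᵃ is the atomistic solution and uᶜ* is the continuum lifting of ũᵃ, then ‖ũᵃ − uᶜ*‖_{ℓ²({K,…,N̄})} ≤ c (N−K)² ‖Δ1² ũᵃ‖_{ℓ²({K+1,…,N−2})}. -/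
/-!
Since `Δ₂ = Δ₁² + 4 Δ₁`, the atomistic operator is `A = C - k₂ Δ₁²`, so the error
`e = ũᵃ - uᶜ*` solves the discrete Dirichlet problem `Δ₁ e = -(k₂ / k_c) Δ₁² ũᵃ` on `{K, …, N̄}`
with zero boundary values. The slopes of `e` average to zero and vary by at most the `ℓ¹` norm `S`
of the right-hand side, so `|e| ≤ 2 M S` with `M = N̄ - K`, and Cauchy–Schwarz turns this into the
`ℓ²` bound with the factor `(N - K)²`.
-/

open Finset

lemma sum_Icc_int_eq_sum_range {R : Type*} [AddCommMonoid R] (f : ℤ → R) {a b : ℤ} {n : ℕ}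
    (h : b + 1 - a = n) : ∑ i ∈ Icc a b, f i = ∑ m ∈ range n, f (a + m) := by
  rw [Int.Icc_eq_finset_map, sum_map, h, Int.toNat_natCast]
  rfl

section DiscreteDirichlet

variable {M : ℕ} {e h : ℕ → ℝ}

lemma slope_sub_slope_zero (hrec : ∀ m, m + 2 ≤ M → e m - 2 * e (m + 1) + e (m + 2) = h m)
    {m : ℕ} (hm : m + 1 ≤ M) :
    (e (m + 1) - e m) - (e 1 - e 0) = ∑ i ∈ range m, h i := by
  rw [← sum_range_sub (fun i => e (i + 1) - e i) m]
  refine sum_congr rfl fun i hi => ?_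
  have := hrec i (by simp at hi; omega)
  linarith

lemma abs_slope_sub_slope_zero_le
    (hrec : ∀ m, m + 2 ≤ M → e m - 2 * e (m + 1) + e (m + 2) = h m) {m : ℕ} (hm : m + 1 ≤ M) :
    |(e (m + 1) - e m) - (e 1 - e 0)| ≤ ∑ i ∈ range (M - 1), |h i| := by
  rw [slope_sub_slope_zero hrec hm]
  exact (abs_sum_le_sum_abs _ _).trans <|
    sum_le_sum_of_subset_of_nonneg (range_mono (by omega)) fun _ _ _ => abs_nonneg _

lemma abs_slope_zero_le (he0 : e 0 = 0) (heM : e M = 0)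
    (hrec : ∀ m, m + 2 ≤ M → e m - 2 * e (m + 1) + e (m + 2) = h m) (hM : 0 < M) :
    |e 1 - e 0| ≤ ∑ i ∈ range (M - 1), |h i| := by
  have hsum : ∑ m ∈ range M, ((e (m + 1) - e m) - (e 1 - e 0)) = -(M * (e 1 - e 0)) := by
    rw [sum_sub_distrib, sum_range_sub, sum_const, card_range, he0, heM, nsmul_eq_mul]
    ring
  refine le_of_mul_le_mul_left ?_ (Nat.cast_pos.mpr hM : (0 : ℝ) < M)
  calc (M : ℝ) * |e 1 - e 0| = |∑ m ∈ range M, ((e (m + 1) - e m) - (e 1 - e 0))| := by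
        rw [hsum, abs_neg, abs_mul, Nat.abs_cast]
    _ ≤ ∑ m ∈ range M, |(e (m + 1) - e m) - (e 1 - e 0)| := abs_sum_le_sum_abs _ _
    _ ≤ ∑ _m ∈ range M, ∑ i ∈ range (M - 1), |h i| :=
        sum_le_sum fun m hm => abs_slope_sub_slope_zero_le hrec (by simp at hm; omega)
    _ = M * ∑ i ∈ range (M - 1), |h i| := by rw [sum_const, card_range, nsmul_eq_mul]

lemma abs_slope_le (he0 : e 0 = 0) (heM : e M = 0)
    (hrec : ∀ m, m + 2 ≤ M → e m - 2 * e (m + 1) + e (m + 2) = h m) {m : ℕ} (hm : m + 1 ≤ M) :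
    |e (m + 1) - e m| ≤ 2 * ∑ i ∈ range (M - 1), |h i| :=
  calc |e (m + 1) - e m| = |((e (m + 1) - e m) - (e 1 - e 0)) + (e 1 - e 0)| := by ring_nf
    _ ≤ |(e (m + 1) - e m) - (e 1 - e 0)| + |e 1 - e 0| := abs_add_le _ _
    _ ≤ 2 * ∑ i ∈ range (M - 1), |h i| := by
        linarith [abs_slope_sub_slope_zero_le hrec hm, abs_slope_zero_le he0 heM hrec (by omega)]

lemma abs_le_of_second_diff (he0 : e 0 = 0) (heM : e M = 0)
    (hrec : ∀ m, m + 2 ≤ M → e m - 2 * e (m + 1) + e (m + 2) = h m) {m : ℕ} (hm : m ≤ M) :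
    |e m| ≤ 2 * M * ∑ i ∈ range (M - 1), |h i| := by
  have hS : 0 ≤ ∑ i ∈ range (M - 1), |h i| := sum_nonneg fun _ _ => abs_nonneg _
  calc |e m| = |∑ p ∈ range m, (e (p + 1) - e p)| := by rw [sum_range_sub, he0, sub_zero]
    _ ≤ ∑ p ∈ range m, |e (p + 1) - e p| := abs_sum_le_sum_abs _ _
    _ ≤ ∑ _p ∈ range m, 2 * ∑ i ∈ range (M - 1), |h i| :=
        sum_le_sum fun p hp => abs_slope_le he0 heM hrec (by simp at hp; omega)
    _ = m * (2 * ∑ i ∈ range (M - 1), |h i|) := by rw [sum_const, card_range, nsmul_eq_mul]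
    _ ≤ 2 * M * ∑ i ∈ range (M - 1), |h i| := by
        have : (m : ℝ) ≤ M := by exact_mod_cast hm
        nlinarith

lemma sum_sq_le_of_second_diff (he0 : e 0 = 0) (heM : e M = 0)
    (hrec : ∀ m, m + 2 ≤ M → e m - 2 * e (m + 1) + e (m + 2) = h m) :
    ∑ m ∈ range (M + 1), e m ^ 2 ≤ 4 * ((M : ℝ) + 1) ^ 4 * ∑ m ∈ range (M - 1), h m ^ 2 := by
  set S := ∑ i ∈ range (M - 1), |h i|
  have hS : S ^ 2 ≤ M * ∑ m ∈ range (M - 1), h m ^ 2 := by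
    have hcard : ((range (M - 1)).card : ℝ) ≤ M := by simp
    calc S ^ 2 ≤ (range (M - 1)).card * ∑ m ∈ range (M - 1), |h m| ^ 2 :=
          sq_sum_le_card_mul_sum_sq
      _ ≤ M * ∑ m ∈ range (M - 1), h m ^ 2 := by
          simp only [sq_abs]
          exact mul_le_mul_of_nonneg_right hcard (sum_nonneg fun _ _ => sq_nonneg _)
  have hM : (0 : ℝ) ≤ M := M.cast_nonneg
  calc ∑ m ∈ range (M + 1), e m ^ 2 ≤ ∑ _m ∈ range (M + 1), (2 * M * S) ^ 2 :=
        sum_le_sum fun m hm => sq_le_sq.mpr <| (abs_le_of_second_diff he0 heM hrec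
          (by simp at hm; omega)).trans (le_abs_self _)
    _ = ((M : ℝ) + 1) * (4 * M ^ 2) * S ^ 2 := by
        rw [sum_const, card_range, nsmul_eq_mul]; push_cast; ring
    _ ≤ ((M : ℝ) + 1) * (4 * M ^ 2) * (M * ∑ m ∈ range (M - 1), h m ^ 2) := by gcongr
    _ ≤ 4 * ((M : ℝ) + 1) ^ 4 * ∑ m ∈ range (M - 1), h m ^ 2 := by
        have : (0 : ℝ) ≤ ∑ m ∈ range (M - 1), h m ^ 2 := sum_nonneg fun _ _ => sq_nonneg _
        have : ((M : ℝ) + 1) * (4 * M ^ 2) * M ≤ 4 * ((M : ℝ) + 1) ^ 4 := by nlinarith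
        nlinarith

end DiscreteDirichlet

lemma sqrt_sum_sq_le_of_second_diff {a b : ℤ} (hab : a < b) {e h : ℤ → ℝ}
    (ha : e a = 0) (hb : e b = 0)
    (hrec : ∀ i, a < i → i < b → e (i - 1) - 2 * e i + e (i + 1) = h i) :
    √(∑ i ∈ Icc a b, e i ^ 2) ≤
      2 * ((b : ℝ) - a + 1) ^ 2 * √(∑ i ∈ Icc (a + 1) (b - 1), h i ^ 2) := by
  obtain ⟨M, rfl⟩ : ∃ M : ℕ, b = a + M := ⟨(b - a).toNat, by omega⟩
  rw [sum_Icc_int_eq_sum_range _ (n := M + 1) (by push_cast; ring),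
    sum_Icc_int_eq_sum_range _ (n := M - 1) (by omega)]
  have hsq := sum_sq_le_of_second_diff (e := fun m => e (a + m)) (h := fun m => h (a + 1 + m))
    (by simpa using ha) hb fun m hm => by
      have := hrec (a + 1 + m) (by omega) (by omega)
      simp only [Nat.cast_add, Nat.cast_ofNat] at this ⊢
      convert this using 3 <;> ring_nf
  calc √(∑ m ∈ range (M + 1), e (a + m) ^ 2)
      ≤ √((2 * ((M : ℝ) + 1) ^ 2) ^ 2 * ∑ m ∈ range (M - 1), h (a + 1 + m) ^ 2) :=
        Real.sqrt_le_sqrt (by linarith)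
    _ = 2 * (((a + M : ℤ) : ℝ) - a + 1) ^ 2 * √(∑ m ∈ range (M - 1), h (a + 1 + m) ^ 2) := by
        rw [Real.sqrt_mul (by positivity), Real.sqrt_sq (by positivity)]
        push_cast; ring

lemma second_diff_sub_eq_of_atomistic_of_continuum {k1 k2 f : ℝ} (hkc : k1 + 4 * k2 ≠ 0)
    {u v : ℤ → ℝ} {i : ℤ}
    (hu : -k1 * (u (i - 1) - 2 * u i + u (i + 1)) - k2 * (u (i - 2) - 2 * u i + u (i + 2)) = f)
    (hv : -(k1 + 4 * k2) * (v (i - 1) - 2 * v i + v (i + 1)) = f) :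
    (u (i - 1) - v (i - 1)) - 2 * (u i - v i) + (u (i + 1) - v (i + 1)) =
      -k2 / (k1 + 4 * k2) *
        (u (i - 2) - 4 * u (i - 1) + 6 * u i - 4 * u (i + 1) + u (i + 2)) := by
  rw [div_mul_eq_mul_div, eq_div_iff hkc]
  linear_combination hv - hu

theorem continuum_lifting_modeling_error_general (k1 k2 : ℝ)
    (hk2 : k2 < 0) (hk : 0 < k1 + 4 * k2) :
    ∃ c : ℝ, 0 < c ∧
      ∀ (N K L : ℤ), 5 ≤ N → 0 < K → K < L → L ≤ N - 1 →
      ∀ (f ua ucstar : ℤ → ℝ),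
        -- ua is the atomistic solution
        (∀ i, 2 ≤ i → i ≤ N - 2 →
          -k1 * (ua (i - 1) - 2 * ua i + ua (i + 1))
            - k2 * (ua (i - 2) - 2 * ua i + ua (i + 2)) = f i) →
        ua 0 = 0 → ua 1 = 0 → ua (N - 1) = 0 → ua N = 0 →
        -- ucstar is the continuum lifting of ua
        (∀ i, K + 1 ≤ i → i ≤ N - 2 →
          -(k1 + 4 * k2) * (ucstar (i - 1) - 2 * ucstar i + ucstar (i + 1)) = f i) →
        ucstar K = ua K → ucstar (N - 1) = 0 →
        Real.sqrt (∑ i ∈ Finset.Icc K (N - 1), (ua i - ucstar i) ^ 2) ≤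
          c * ((N : ℝ) - (K : ℝ)) ^ 2 *
            Real.sqrt (∑ i ∈ Finset.Icc (K + 1) (N - 2),
              (ua (i - 2) - 4 * ua (i - 1) + 6 * ua i - 4 * ua (i + 1)
                + ua (i + 2)) ^ 2) := by
  set α := -k2 / (k1 + 4 * k2)
  have hα : 0 < α := div_pos (neg_pos.mpr hk2) hk
  refine ⟨2 * α, by positivity, ?_⟩
  intro N K L _ _ hKL hLN f ua ucstar hua _ _ huaN _ huc hucK hucN
  set D : ℤ → ℝ := fun i => ua (i - 2) - 4 * ua (i - 1) + 6 * ua i - 4 * ua (i + 1) + ua (i + 2)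
  have hbound := sqrt_sum_sq_le_of_second_diff (a := K) (b := N - 1) (by omega)
    (e := fun i => ua i - ucstar i) (h := fun i => α * D i) (by simp [hucK]) (by simp [huaN, hucN])
    fun i hKi hiN => second_diff_sub_eq_of_atomistic_of_continuum hk.ne'
      (hua i (by omega) (by omega)) (huc i (by omega) (by omega))
  have hscale : √(∑ i ∈ Icc (K + 1) (N - 1 - 1), (α * D i) ^ 2) =
      α * √(∑ i ∈ Icc (K + 1) (N - 2), D i ^ 2) := by
    simp_rw [mul_pow, ← mul_sum, show N - 1 - 1 = N - 2 by ring]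
    rw [Real.sqrt_mul (sq_nonneg α), Real.sqrt_sq hα.le]
  calc √(∑ i ∈ Icc K (N - 1), (ua i - ucstar i) ^ 2)
      ≤ 2 * (((N - 1 : ℤ) : ℝ) - K + 1) ^ 2 * (α * √(∑ i ∈ Icc (K + 1) (N - 2), D i ^ 2)) :=
        hscale ▸ hbound
    _ = 2 * α * ((N : ℝ) - K) ^ 2 * √(∑ i ∈ Icc (K + 1) (N - 2), D i ^ 2) := by
        push_cast; ring

/-- the continuum modeling error on the continuum subdomain
(estimate (CBound) of the paper). -/
theorem continuum_lifting_modeling_error (k1 k2 : ℝ)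
    (hk1 : 0 < k1) (hk2 : k2 < 0) (hk : 0 < k1 + 4 * k2) :
    ∃ c : ℝ, 0 < c ∧
      ∀ (N K L : ℤ), 5 ≤ N → 0 < K → K < L → L ≤ N - 1 →
      ∀ (f ua ucstar : ℤ → ℝ),
        -- ua is the atomistic solution
        (∀ i, 2 ≤ i → i ≤ N - 2 →
          -k1 * (ua (i - 1) - 2 * ua i + ua (i + 1))
            - k2 * (ua (i - 2) - 2 * ua i + ua (i + 2)) = f i) →
        ua 0 = 0 → ua 1 = 0 → ua (N - 1) = 0 → ua N = 0 →
        -- ucstar is the continuum lifting of ua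
        (∀ i, K + 1 ≤ i → i ≤ N - 2 →
          -(k1 + 4 * k2) * (ucstar (i - 1) - 2 * ucstar i + ucstar (i + 1)) = f i) →
        ucstar K = ua K → ucstar (N - 1) = 0 →
        Real.sqrt (∑ i ∈ Finset.Icc K (N - 1), (ua i - ucstar i) ^ 2) ≤
          c * ((N : ℝ) - (K : ℝ)) ^ 2 *
            Real.sqrt (∑ i ∈ Finset.Icc (K + 1) (N - 2),
              (ua (i - 2) - 4 * ua (i - 1) + 6 * ua i - 4 * ua (i + 1)
                + ua (i + 2)) ^ 2) :=
  continuum_lifting_modeling_error_general k1 k2 hk2 hk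
end

section
/- Under Assumptions A and B there exist constants c > 0 and N₀, depending only on c₁, p and γ, such that for all N ≥ N₀ and all real α₁, α_c: with v¹_i = α₁ i/L and vᶜ_i = α_c (N̄ − i)/(N̄ − K), one has Σ_{i=K}^{L} (v¹_i − vᶜ_i)² ≥ c (L−K) γ² (α_c² + α₁²). -/
/-!
On the overlap both modes are affine in `i`, hence so is their difference `f`. The sum of `f²`
over `L - K + 1` consecutive integers dominates `(L - K + 1) / 6` times the sum of the squares of
the endpoint values `f K = t α₁ - αc` and `f L = α₁ - r αc`, where `t = K / L = 1 - γ` and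
`r = (N̄ - L) / (N̄ - K)` lie in `[0, 1]`. The map `(α₁, αc) ↦ (f K, f L)` has determinant
`1 - t r ≥ 1 - t = γ`, so inverting it costs at most a factor `γ⁻²`.
-/

open Finset

theorem Int.sum_Icc_add_natCast_eq_sum_range {M : Type*} [AddCommMonoid M] (K : ℤ) (m : ℕ)
    (g : ℤ → M) : ∑ i ∈ Icc K (K + m), g i = ∑ j ∈ Finset.range (m + 1), g (K + j) := by
  rw [Int.Icc_eq_finset_map, sum_map, show (K + m + 1 - K).toNat = m + 1 by omega]
  rfl

theorem sum_range_sq_affine (a b : ℝ) (m : ℕ) :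
    ∑ j ∈ range (m + 1), (a + b * j) ^ 2 =
      (m + 1) / 6 * (a ^ 2 + (a + b * m) ^ 2 + (2 * a + b * m) ^ 2 + m * b ^ 2) := by
  induction m with
  | zero => simp; ring
  | succ m ih =>
    rw [sum_range_succ, ih]
    push_cast
    ring

theorem sum_Icc_sq_le_of_affine {f : ℝ → ℝ} {a b : ℝ} (hf : ∀ x, f x = a + b * x) {K L : ℤ}
    (hKL : K ≤ L) :
    ((L : ℝ) - K + 1) / 6 * (f K ^ 2 + f L ^ 2) ≤ ∑ i ∈ Icc K L, f i ^ 2 := by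
  obtain ⟨m, rfl⟩ : ∃ m : ℕ, L = K + m := ⟨(L - K).toNat, by omega⟩
  have hsum : ∑ i ∈ Icc K (K + m), f i ^ 2 = ∑ j ∈ range (m + 1), ((a + b * K) + b * j) ^ 2 := by
    rw [Int.sum_Icc_add_natCast_eq_sum_range]
    refine sum_congr rfl fun j _ => ?_
    rw [hf]
    push_cast
    ring
  rw [hsum, sum_range_sq_affine, hf, hf]
  push_cast
  have hrest : 0 ≤ (2 * (a + b * K) + b * m) ^ 2 + m * b ^ 2 := by positivity
  have hm : (0 : ℝ) ≤ (m + 1) / 6 := by positivity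
  calc ((K : ℝ) + m - K + 1) / 6 * ((a + b * K) ^ 2 + (a + b * (K + m)) ^ 2)
      = (m + 1) / 6 * ((a + b * K) ^ 2 + (a + b * K + b * m) ^ 2) := by ring
    _ ≤ _ := mul_le_mul_of_nonneg_left (by linarith) hm

theorem sq_one_sub_mul_mul_sq_add_sq_le {t r : ℝ} (ht : |t| ≤ 1) (hr : |r| ≤ 1) (x y : ℝ) :
    (1 - t * r) ^ 2 * (x ^ 2 + y ^ 2) ≤ 4 * ((t * x - y) ^ 2 + (x - r * y) ^ 2) := by
  set u := t * x - y
  set v := x - r * y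
  have ht2 : t ^ 2 ≤ 1 := (sq_le_one_iff_abs_le_one t).2 ht
  have hr2 : r ^ 2 ≤ 1 := (sq_le_one_iff_abs_le_one r).2 hr
  have hy : (1 - t * r) * y = t * v - u := by ring
  have hx : (1 - t * r) * x = v - r * u := by ring
  have hy2 : (t * v - u) ^ 2 ≤ 2 * (u ^ 2 + v ^ 2) := by
    nlinarith [sq_nonneg (t * v + u), mul_nonneg (sub_nonneg.2 ht2) (sq_nonneg v)]
  have hx2 : (v - r * u) ^ 2 ≤ 2 * (u ^ 2 + v ^ 2) := by
    nlinarith [sq_nonneg (v + r * u), mul_nonneg (sub_nonneg.2 hr2) (sq_nonneg u)]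
  calc (1 - t * r) ^ 2 * (x ^ 2 + y ^ 2) = (v - r * u) ^ 2 + (t * v - u) ^ 2 := by
        rw [← hx, ← hy]; ring
    _ ≤ 4 * (u ^ 2 + v ^ 2) := by linarith
    _ = 4 * ((t * x - y) ^ 2 + (x - r * y) ^ 2) := by ring

theorem linear_modes_endpoint_sq_bound {K L M : ℝ} (hK : 0 < K) (hKL : K < L) (hLM : L ≤ M)
    {f : ℝ → ℝ} {α₁ αc : ℝ} (hf : ∀ x, f x = α₁ * x / L - αc * (M - x) / (M - K)) :
    ((L - K) / L) ^ 2 * (α₁ ^ 2 + αc ^ 2) ≤ 4 * (f K ^ 2 + f L ^ 2) := by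
  have hL : 0 < L := hK.trans hKL
  have hMK : 0 < M - K := by linarith
  set t := K / L with ht
  set r := (M - L) / (M - K) with hr
  have ht0 : 0 ≤ t := by positivity
  have ht1 : t ≤ 1 := (div_le_one (by linarith)).2 hKL.le
  have hr0 : 0 ≤ r := div_nonneg (by linarith) hMK.le
  have hr1 : r ≤ 1 := (div_le_one hMK).2 (by linarith)
  have hfK : f K = t * α₁ - αc := by rw [hf, ht]; field_simp
  have hfL : f L = α₁ - r * αc := by rw [hf, hr]; field_simp
  have hdet : (L - K) / L = 1 - t := by rw [ht]; field_simp
  have hdet_le : (1 - t) ^ 2 ≤ (1 - t * r) ^ 2 :=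
    pow_le_pow_left₀ (by linarith) (by nlinarith) 2
  rw [hfK, hfL, hdet]
  calc (1 - t) ^ 2 * (α₁ ^ 2 + αc ^ 2) ≤ (1 - t * r) ^ 2 * (α₁ ^ 2 + αc ^ 2) := by gcongr
    _ ≤ _ := sq_one_sub_mul_mul_sq_add_sq_le (abs_le.2 ⟨by linarith, ht1⟩)
        (abs_le.2 ⟨by linarith, hr1⟩) α₁ αc

theorem linear_modes_overlap_bound_general (c₁ p γ : ℝ) :
    ∃ (c : ℝ) (N₀ : ℤ), 0 < c ∧
      ∀ (N K L : ℤ),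
        5 ≤ N → 0 < K → K < L → L ≤ N - 1 → 4 ≤ L → N₀ ≤ N →
        -- Assumption A
        (L : ℝ) ≤ c₁ * (N : ℝ) ^ (1 / p) →
        -- Assumption B
        3 / (L : ℝ) < γ →
        (L : ℝ) - (K : ℝ) = γ * (L : ℝ) →
        ∀ α₁ αc : ℝ,
          c * ((L : ℝ) - (K : ℝ)) * γ ^ 2 * (αc ^ 2 + α₁ ^ 2) ≤
            ∑ i ∈ Finset.Icc K L,
              (α₁ * (i : ℝ) / (L : ℝ)
                - αc * (((N : ℝ) - 1) - (i : ℝ)) / (((N : ℝ) - 1) - (K : ℝ))) ^ 2 := by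
  refine ⟨1 / 24, 0, by norm_num, ?_⟩
  intro N K L _ hK hKL hLN _ _ _ _ hγ α₁ αc
  have hK0 : (0 : ℝ) < K := by exact_mod_cast hK
  have hKL' : (K : ℝ) < L := by exact_mod_cast hKL
  have hLN' : (L : ℝ) ≤ N - 1 := by exact_mod_cast hLN
  have hγL : γ = (L - K) / L := by field_simp; linarith
  set f : ℝ → ℝ := fun x => α₁ * x / L - αc * (N - 1 - x) / (N - 1 - K)
  have hf_affine :
      ∀ x, f x = -(αc * (N - 1) / (N - 1 - K)) + (α₁ / L + αc / (N - 1 - K)) * x := by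
    intro x
    have : (N : ℝ) - 1 - K ≠ 0 := by linarith
    simp only [f]
    field_simp
    ring
  have hendpoints := linear_modes_endpoint_sq_bound hK0 hKL' hLN' (f := f) fun _ => rfl
  calc 1 / 24 * ((L : ℝ) - K) * γ ^ 2 * (αc ^ 2 + α₁ ^ 2)
      ≤ ((L : ℝ) - K + 1) / 24 * (γ ^ 2 * (α₁ ^ 2 + αc ^ 2)) := by
        rw [add_comm (αc ^ 2)]
        have : 0 ≤ γ ^ 2 * (α₁ ^ 2 + αc ^ 2) := by positivity
        nlinarith
    _ ≤ ((L : ℝ) - K + 1) / 6 * (f K ^ 2 + f L ^ 2) := by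
        rw [hγL]
        have : (0 : ℝ) ≤ L - K + 1 := by linarith
        nlinarith [hendpoints]
    _ ≤ ∑ i ∈ Icc K L, f i ^ 2 := sum_Icc_sq_le_of_affine hf_affine hKL.le

/-- lower bound for the overlap mismatch of the linear atomistic
and continuum modes (estimate (eq1:ap), Appendix B of the paper). -/
theorem linear_modes_overlap_bound (c₁ p γ : ℝ)
    (hc₁ : 0 < c₁) (hp : 1 < p) (hγ1 : γ < 1) :
    ∃ (c : ℝ) (N₀ : ℤ), 0 < c ∧
      ∀ (N K L : ℤ),
        5 ≤ N → 0 < K → K < L → L ≤ N - 1 → 4 ≤ L → N₀ ≤ N →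
        -- Assumption A
        (L : ℝ) ≤ c₁ * (N : ℝ) ^ (1 / p) →
        -- Assumption B
        3 / (L : ℝ) < γ →
        (L : ℝ) - (K : ℝ) = γ * (L : ℝ) →
        ∀ α₁ αc : ℝ,
          c * ((L : ℝ) - (K : ℝ)) * γ ^ 2 * (αc ^ 2 + α₁ ^ 2) ≤
            ∑ i ∈ Finset.Icc K L,
              (α₁ * (i : ℝ) / (L : ℝ)
                - αc * (((N : ℝ) - 1) - (i : ℝ)) / (((N : ℝ) - 1) - (K : ℝ))) ^ 2 :=
  linear_modes_overlap_bound_general c₁ p γ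
end

section
/- Let k1 > 0, k2 < 0 with k1 + 4k2 > 0. Then (i) k1² + 4k1k2 > 0; (ii) λ := (k1 + 2k2 − √(k1² + 4k1k2))/(−2k2) satisfies 0 < λ < 1; (iii) σ = 1 and σ = λ are roots of the characteristic polynomial p(σ) = −k2 σ⁴ − k1 σ³ + (2k1 + 2k2) σ² − k1 σ − k2; and consequently (iv) the geometric sequence v : ℤ → ℝ, v_i = λ^i, satisfies −k1 (v_{i−1} − 2v_i + v_{i+1}) − k2 (v_{i−2} − 2v_i + v_{i+2}) = 0 for every i ∈ ℤ. -/
/-!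
`λ` is the root of modulus less than one of the reciprocal quadratic
`k2 σ² + (k1 + 2k2) σ + k2`, whose discriminant is `k1² + 4 k1 k2`; the characteristic
polynomial of the atomistic operator is `-(σ - 1)²` times this quadratic, and on `σ ^ i`
the operator acts as multiplication by `σ ^ (i - 2) p(σ)`.
-/

section CharPoly

variable {K : Type*} [Field K]

def atomisticCharPoly (k1 k2 σ : K) : K :=
  -k2 * σ ^ 4 - k1 * σ ^ 3 + (2 * k1 + 2 * k2) * σ ^ 2 - k1 * σ - k2

theorem atomisticCharPoly_eq (k1 k2 σ : K) :
    atomisticCharPoly k1 k2 σ = -(σ - 1) ^ 2 * (k2 * σ ^ 2 + (k1 + 2 * k2) * σ + k2) := by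
  unfold atomisticCharPoly; ring

theorem atomistic_zpow_eq (k1 k2 : K) {σ : K} (hσ : σ ≠ 0) (i : ℤ) :
    -k1 * (σ ^ (i - 1) - 2 * σ ^ i + σ ^ (i + 1))
      - k2 * (σ ^ (i - 2) - 2 * σ ^ i + σ ^ (i + 2))
      = σ ^ (i - 2) * atomisticCharPoly k1 k2 σ := by
  simp only [atomisticCharPoly, zpow_add₀ hσ, zpow_sub₀ hσ, zpow_one, zpow_two]
  field_simp
  ring

end CharPoly

noncomputable def decayRate (k1 k2 : ℝ) : ℝ :=
  (k1 + 2 * k2 - Real.sqrt (k1 ^ 2 + 4 * k1 * k2)) / (-2 * k2)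

section DecayRate

variable {k1 k2 : ℝ}

theorem atomistic_discrim_pos (hk2 : k2 < 0) (hk : 0 < k1 + 4 * k2) :
    0 < k1 ^ 2 + 4 * k1 * k2 := by
  rw [show k1 ^ 2 + 4 * k1 * k2 = k1 * (k1 + 4 * k2) by ring]
  exact mul_pos (by linarith) hk

theorem decayRate_pos (hk2 : k2 < 0) (hk : 0 < k1 + 4 * k2) : 0 < decayRate k1 k2 := by
  have hsqrt : Real.sqrt (k1 ^ 2 + 4 * k1 * k2) < k1 + 2 * k2 := by
    rw [Real.sqrt_lt' (by linarith)]
    nlinarith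
  exact div_pos (by linarith) (by linarith)

theorem decayRate_lt_one (hk2 : k2 < 0) (hk : 0 < k1 + 4 * k2) : decayRate k1 k2 < 1 := by
  have hsqrt : k1 + 4 * k2 < Real.sqrt (k1 ^ 2 + 4 * k1 * k2) := by
    rw [Real.lt_sqrt hk.le]
    nlinarith
  rw [decayRate, div_lt_one (by linarith)]
  linarith

theorem decayRate_quadratic (hk2 : k2 < 0) (hk : 0 < k1 + 4 * k2) :
    k2 * decayRate k1 k2 ^ 2 + (k1 + 2 * k2) * decayRate k1 k2 + k2 = 0 := by
  have hdiscrim : discrim k2 (k1 + 2 * k2) k2 =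
      Real.sqrt (k1 ^ 2 + 4 * k1 * k2) * Real.sqrt (k1 ^ 2 + 4 * k1 * k2) := by
    rw [Real.mul_self_sqrt (atomistic_discrim_pos hk2 hk).le, discrim]; ring
  rw [sq, quadratic_eq_zero_iff hk2.ne hdiscrim]
  left
  rw [decayRate, ← neg_div_neg_eq]
  ring

theorem atomisticCharPoly_decayRate (hk2 : k2 < 0) (hk : 0 < k1 + 4 * k2) :
    atomisticCharPoly k1 k2 (decayRate k1 k2) = 0 := by
  rw [atomisticCharPoly_eq, decayRate_quadratic hk2 hk, mul_zero]

end DecayRate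

theorem characteristic_roots_general (k1 k2 : ℝ)
    (hk2 : k2 < 0) (hk : 0 < k1 + 4 * k2) :
    let lam := (k1 + 2 * k2 - Real.sqrt (k1 ^ 2 + 4 * k1 * k2)) / (-2 * k2)
    -- (i)
    0 < k1 ^ 2 + 4 * k1 * k2 ∧
    -- (ii)
    (0 < lam ∧ lam < 1) ∧
    -- (iii): σ = 1 and σ = λ are roots of the characteristic polynomial
    (-k2 * (1 : ℝ) ^ 4 - k1 * 1 ^ 3 + (2 * k1 + 2 * k2) * 1 ^ 2 - k1 * 1 - k2 = 0) ∧
    (-k2 * lam ^ 4 - k1 * lam ^ 3 + (2 * k1 + 2 * k2) * lam ^ 2 - k1 * lam - k2 = 0) ∧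
    -- (iv): the geometric sequence v_i = λ^i is annihilated by the atomistic operator
    (∀ i : ℤ,
      -k1 * (lam ^ (i - 1) - 2 * lam ^ i + lam ^ (i + 1))
        - k2 * (lam ^ (i - 2) - 2 * lam ^ i + lam ^ (i + 2)) = 0) := by
  have hroot := atomisticCharPoly_decayRate hk2 hk
  refine ⟨atomistic_discrim_pos hk2 hk, ⟨decayRate_pos hk2 hk, decayRate_lt_one hk2 hk⟩,
    by ring, hroot, fun i => ?_⟩
  exact (atomistic_zpow_eq k1 k2 (decayRate_pos hk2 hk).ne' i).trans (by rw [hroot, mul_zero])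

/-- properties of the exponential decay rate λ and the
characteristic polynomial of the atomistic operator. -/
theorem characteristic_roots (k1 k2 : ℝ)
    (hk1 : 0 < k1) (hk2 : k2 < 0) (hk : 0 < k1 + 4 * k2) :
    let lam := (k1 + 2 * k2 - Real.sqrt (k1 ^ 2 + 4 * k1 * k2)) / (-2 * k2)
    -- (i)
    0 < k1 ^ 2 + 4 * k1 * k2 ∧
    -- (ii)
    (0 < lam ∧ lam < 1) ∧
    -- (iii): σ = 1 and σ = λ are roots of the characteristic polynomial
    (-k2 * (1 : ℝ) ^ 4 - k1 * 1 ^ 3 + (2 * k1 + 2 * k2) * 1 ^ 2 - k1 * 1 - k2 = 0) ∧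
    (-k2 * lam ^ 4 - k1 * lam ^ 3 + (2 * k1 + 2 * k2) * lam ^ 2 - k1 * lam - k2 = 0) ∧
    -- (iv): the geometric sequence v_i = λ^i is annihilated by the atomistic operator
    (∀ i : ℤ,
      -k1 * (lam ^ (i - 1) - 2 * lam ^ i + lam ^ (i + 1))
        - k2 * (lam ^ (i - 2) - 2 * lam ^ i + lam ^ (i + 2)) = 0) :=
  characteristic_roots_general k1 k2 hk2 hk
end
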